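/- arXiv:1906.00522 — 16 statements merged into one kernel-verified Lean document; each statement's English description precedes it below -/
import Mathlib

section
/- Let R be a commutative ring and p a nonzero weakly prime element of R. Then either p is prime or p^2 = 0. -/
/-!
Shifting `a` and `b` by multiples of `p` changes neither `p ∣ a * b` nor whether `p` divides `a`
or `b`. If all four products `(a + i * p) * (b + j * p)` with `i, j ∈ {0, 1}` vanished, then so
would their alternating sum `p ^ 2`. So when `p ^ 2 ≠ 0`, every product divisible by `p` has a
shift with nonzero product, to which weak primality applies.
-/

theorem exists_add_mul_mul_add_mul_ne_zero {R : Type*} [CommRing R] {p : R} (hp : p ^ 2 ≠ 0)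
    (a b : R) : ∃ i j : R, (a + i * p) * (b + j * p) ≠ 0 := by
  by_contra! h
  apply hp
  calc p ^ 2 = (a + 1 * p) * (b + 1 * p) - (a + 1 * p) * (b + 0 * p)
        - (a + 0 * p) * (b + 1 * p) + (a + 0 * p) * (b + 0 * p) := by ring
    _ = 0 := by simp only [h, sub_zero, add_zero]

theorem dvd_add_mul_mul_add_mul {R : Type*} [CommRing R] {p a b : R} (hab : p ∣ a * b)
    (i j : R) : p ∣ (a + i * p) * (b + j * p) := by
  have hexpand : (a + i * p) * (b + j * p) = a * b + p * (a * j + i * (b + j * p)) := by ring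
  rw [hexpand]
  exact dvd_add hab (dvd_mul_right p _)

theorem weakly_prime_is_prime_or_sq_zero_general {R : Type*} [CommRing R] (p : R)
    (hpu : ¬IsUnit p)
    (hwp : ∀ a b : R, p ∣ a * b → a * b ≠ 0 → p ∣ a ∨ p ∣ b) :
    Prime p ∨ p ^ 2 = 0 := by
  refine or_iff_not_imp_right.2 fun hsq => ⟨fun hp0 => hsq (by simp [hp0]), hpu, fun a b hab => ?_⟩
  obtain ⟨i, j, hne⟩ := exists_add_mul_mul_add_mul_ne_zero hsq a b
  simpa only [dvd_add_left (dvd_mul_left p i), dvd_add_left (dvd_mul_left p j)] using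
    hwp _ _ (dvd_add_mul_mul_add_mul hab i j) hne

theorem weakly_prime_is_prime_or_sq_zero {R : Type*} [CommRing R] (p : R)
    (hp0 : p ≠ 0) (hpu : ¬IsUnit p)
    (hwp : ∀ a b : R, p ∣ a * b → a * b ≠ 0 → p ∣ a ∨ p ∣ b) :
    Prime p ∨ p ^ 2 = 0 :=
  weakly_prime_is_prime_or_sq_zero_general p hpu hwp
end

section
/- Let R = R1 × R2 be a decomposable commutative ring. Then every nonzero weakly prime element of R is prime. -/
/-!
If a weakly prime `p` is not prime, some `a * b = 0` is divisible by `p` while `a` and `b` are not.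
Perturbing the factors to `a * (p + b)` and `(p + a) * (p + b)` shows `p * a = 0` and `p * p = 0`.
A nontrivial idempotent `e` then gives a contradiction: `p` cannot divide `e` or `1 - e`, since an
idempotent divisible by a square-zero element vanishes, so `p * e = p * (1 - e) = 0` and `p = 0`.
In `R₁ × R₂` the idempotent is `(1, 0)`.
-/

section

variable {R : Type*}

def IsWeaklyPrime [CommRing R] (p : R) : Prop :=
  p ≠ 0 ∧ ¬IsUnit p ∧ ∀ a b : R, p ∣ a * b → a * b ≠ 0 → p ∣ a ∨ p ∣ b

theorem IsIdempotentElem.eq_zero_of_dvd_of_mul_self_eq_zero [CommMonoidWithZero R] {p e : R}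
    (he : IsIdempotentElem e) (hpp : p * p = 0) (hpe : p ∣ e) : e = 0 := by
  obtain ⟨c, rfl⟩ := hpe
  calc p * c = (p * c) * (p * c) := he.eq.symm
    _ = (p * p) * (c * c) := mul_mul_mul_comm p c p c
    _ = 0 := by rw [hpp, zero_mul]

namespace IsWeaklyPrime

variable [CommRing R] {p a b : R}

theorem mul_eq_zero_of_not_dvd (hp : IsWeaklyPrime p) (hab : a * b = 0)
    (ha : ¬p ∣ a) (hb : ¬p ∣ b) : p * a = 0 := by
  by_contra hpa
  have hperturb : a * (p + b) = p * a := by linear_combination hab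
  rcases hp.2.2 a (p + b) (hperturb ▸ dvd_mul_right p a) (hperturb ▸ hpa) with h | h
  · exact ha h
  · exact hb ((dvd_add_right (dvd_refl p)).mp h)

theorem mul_self_eq_zero_of_not_dvd (hp : IsWeaklyPrime p) (hab : a * b = 0)
    (ha : ¬p ∣ a) (hb : ¬p ∣ b) : p * p = 0 := by
  have hpa := hp.mul_eq_zero_of_not_dvd hab ha hb
  have hpb := hp.mul_eq_zero_of_not_dvd (mul_comm a b ▸ hab) hb ha
  by_contra hpp
  have hperturb : (p + a) * (p + b) = p * p := by linear_combination hpb + hpa + hab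
  rcases hp.2.2 _ _ (hperturb ▸ dvd_mul_right p p) (hperturb ▸ hpp) with h | h
  · exact ha ((dvd_add_right (dvd_refl p)).mp h)
  · exact hb ((dvd_add_right (dvd_refl p)).mp h)

theorem prime_of_isIdempotentElem (hp : IsWeaklyPrime p) {e : R} (he : IsIdempotentElem e)
    (he0 : e ≠ 0) (he1 : e ≠ 1) : Prime p := by
  refine ⟨hp.1, hp.2.1, fun a b hab => ?_⟩
  by_contra! hndvd
  have hab0 : a * b = 0 := by
    by_contra hab0
    rcases hp.2.2 a b hab hab0 with h | h
    exacts [hndvd.1 h, hndvd.2 h]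
  have hpp := hp.mul_self_eq_zero_of_not_dvd hab0 hndvd.1 hndvd.2
  have hpe : ¬p ∣ e := fun h => he0 (he.eq_zero_of_dvd_of_mul_self_eq_zero hpp h)
  have hpe' : ¬p ∣ 1 - e := fun h =>
    sub_ne_zero.mpr he1.symm (he.one_sub.eq_zero_of_dvd_of_mul_self_eq_zero hpp h)
  have h1 := hp.mul_eq_zero_of_not_dvd he.mul_one_sub_self hpe hpe'
  have h2 := hp.mul_eq_zero_of_not_dvd he.one_sub_mul_self hpe' hpe
  exact hp.1 (by linear_combination h1 + h2)

end IsWeaklyPrime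

end

theorem weakly_prime_in_product_is_prime {R₁ R₂ : Type*} [CommRing R₁] [CommRing R₂]
    [Nontrivial R₁] [Nontrivial R₂] (p : R₁ × R₂)
    (hp0 : p ≠ 0) (hpu : ¬IsUnit p)
    (hwp : ∀ a b : R₁ × R₂, p ∣ a * b → a * b ≠ 0 → p ∣ a ∨ p ∣ b) :
    Prime p := by
  have he : IsIdempotentElem ((1, 0) : R₁ × R₂) := by ext <;> simp
  have he0 : ((1, 0) : R₁ × R₂) ≠ 0 := fun h => one_ne_zero (congrArg Prod.fst h)
  have he1 : ((1, 0) : R₁ × R₂) ≠ 1 := fun h => zero_ne_one (congrArg Prod.snd h)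
  exact IsWeaklyPrime.prime_of_isIdempotentElem ⟨hp0, hpu, hwp⟩ he he0 he1
end

section
/- Let R be a commutative ring and a a nonzero very strongly irreducible element of R. Then the annihilator of a is contained in the Jacobson radical of R. In particular, if J(R) = 0, then a is a regular element (not a zero divisor). -/
/-! If `c * a = 0` then `(c * y + 1) * a = a` for every `y`; a very strongly irreducible
nonunit `a` only admits factorizations `a = u * a` with `u` a unit, so every `c * y + 1` is a
unit, i.e. `c` lies in the Jacobson radical. -/

section

variable {R : Type*} [CommRing R]

theorem mul_add_one_mul_eq_self_of_mul_eq_zero {a c : R} (hc : c * a = 0) (y : R) :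
    (c * y + 1) * a = a := by
  rw [add_mul, mul_right_comm, hc, zero_mul, zero_add, one_mul]

theorem mem_jacobson_bot_of_mul_eq_zero {a c : R} (hfix : ∀ u : R, u * a = a → IsUnit u)
    (hc : c * a = 0) : c ∈ (⊥ : Ideal R).jacobson :=
  Ideal.mem_jacobson_bot.mpr fun y => hfix _ (mul_add_one_mul_eq_self_of_mul_eq_zero hc y)

end

theorem ann_of_very_strongly_irreducible_subset_jacobson_general {R : Type*} [CommRing R]
    (a : R) (hau : ¬IsUnit a)
    (hvsi : ∀ b c : R, a = b * c → IsUnit b ∨ IsUnit c) :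
    (∀ c : R, c * a = 0 → c ∈ (⊥ : Ideal R).jacobson) ∧
    ((⊥ : Ideal R).jacobson = ⊥ → ∀ c : R, c * a = 0 → c = 0) := by
  have hfix : ∀ u : R, u * a = a → IsUnit u := fun u hu =>
    (hvsi u a hu.symm).resolve_right hau
  have hann : ∀ c : R, c * a = 0 → c ∈ (⊥ : Ideal R).jacobson := fun c hc =>
    mem_jacobson_bot_of_mul_eq_zero hfix hc
  refine ⟨hann, fun hJ c hc => ?_⟩
  simpa only [hJ, Ideal.mem_bot] using hann c hc

theorem ann_of_very_strongly_irreducible_subset_jacobson {R : Type*} [CommRing R]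
    (a : R) (ha0 : a ≠ 0) (hau : ¬IsUnit a)
    (hvsi : ∀ b c : R, a = b * c → IsUnit b ∨ IsUnit c) :
    (∀ c : R, c * a = 0 → c ∈ (⊥ : Ideal R).jacobson) ∧
    ((⊥ : Ideal R).jacobson = ⊥ → ∀ c : R, c * a = 0 → c = 0) :=
  ann_of_very_strongly_irreducible_subset_jacobson_general a hau hvsi
end

section
/- Let R be a commutative ring and a, b ∈ R with a ≠ 0. Then a and b are very strongly associates in R[X] if and only if a and b are very strongly associates in R and ann(b) ⊆ nil(R). -/
/-! Comparing coefficients, `C a = f * C b` means `a = f₀ b` and `fᵢ b = 0` for `i ≠ 0`, while `f`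
is a unit iff `f₀` is a unit and every `fᵢ` with `i ≠ 0` is nilpotent. So the unit condition for
`C a, C b` in `R[X]` follows from the one for `a, b` in `R` together with `ann b ⊆ nil R`.
Conversely, writing `a = r b`, every `c ∈ ann b` gives the solution `f = C r + X * C c`, and `f`
being a unit forces `c` to be nilpotent. -/

/-- `a` and `b` are very strongly associates in `S`: they generate the same ideal,
and either `a = b = 0`, or `a ≠ 0` and every `r` with `a = r * b` is a unit. -/
def VSAssoc {S : Type*} [CommRing S] (a b : S) : Prop :=
  a ∣ b ∧ b ∣ a ∧ ((a = 0 ∧ b = 0) ∨ (a ≠ 0 ∧ ∀ r : S, a = r * b → IsUnit r))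

open Polynomial

theorem vsassoc_iff_of_ne_zero {S : Type*} [CommRing S] {a b : S} (ha : a ≠ 0) :
    VSAssoc a b ↔ a ∣ b ∧ b ∣ a ∧ ∀ r : S, a = r * b → IsUnit r := by
  simp [VSAssoc, ha]

namespace Polynomial

variable {R : Type*} [CommRing R]

theorem C_dvd_C_iff {a b : R} : C a ∣ C b ↔ a ∣ b := by
  rw [C_dvd_iff_dvd_coeff]
  refine ⟨fun h => by simpa using h 0, fun h i => ?_⟩
  rw [coeff_C]
  split_ifs
  exacts [h, dvd_zero a]

theorem forall_isUnit_of_C_eq_mul_C_iff {a b : R} (hba : b ∣ a) :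
    (∀ f : R[X], C a = f * C b → IsUnit f) ↔
      (∀ r : R, a = r * b → IsUnit r) ∧ ∀ c : R, c * b = 0 → IsNilpotent c := by
  refine ⟨fun hu => ⟨fun r hr => ?_, fun c hc => ?_⟩, fun ⟨hu, hnil⟩ f hf => ?_⟩
  · exact isUnit_C.mp (hu (C r) (by rw [← C_mul, hr]))
  · obtain ⟨r, rfl⟩ := hba
    have hf : C (b * r) = (C r + X * C c) * C b := by
      rw [add_mul, mul_assoc, ← C_mul, ← C_mul, hc, C_0, mul_zero, add_zero, mul_comm]
    simpa using (isUnit_C_add_X_mul_iff.mp (hu _ hf)).2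
  · have hcoeff (i : ℕ) : (C a).coeff i = f.coeff i * b := by rw [hf, coeff_mul_C]
    refine isUnit_iff_coeff_isUnit_isNilpotent.mpr ⟨hu _ ?_, fun i hi => hnil _ ?_⟩
    · simpa using hcoeff 0
    · simpa [coeff_C, hi, eq_comm] using hcoeff i

end Polynomial

theorem vsassoc_polynomial_iff {R : Type*} [CommRing R] (a b : R) (ha : a ≠ 0) :
    VSAssoc (Polynomial.C a) (Polynomial.C b) ↔
      VSAssoc a b ∧ ∀ c : R, c * b = 0 → IsNilpotent c := by
  rw [vsassoc_iff_of_ne_zero ha, vsassoc_iff_of_ne_zero (C_ne_zero.mpr ha), C_dvd_C_iff,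
    C_dvd_C_iff]
  simp only [and_assoc]
  exact and_congr_right fun _ => and_congr_right forall_isUnit_of_C_eq_mul_C_iff
end

section
/- Let R be a commutative ring. Then R is reduced if and only if for all a ∈ R and f ∈ R[X], if a and f are associates in R[X] (i.e., they generate the same ideal of R[X]), then f ∈ R (f is a constant polynomial). -/
theorem reduced_iff_assoc_const {R : Type*} [CommRing R] :
    IsReduced R ↔
      ∀ (a : R) (f : Polynomial R),
        Ideal.span {Polynomial.C a} = Ideal.span {f} → ∃ b : R, f = Polynomial.C b := by
  constructor
  · intro hred a f hspan
    refine ⟨f.coeff 0, ?_⟩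
    ext i
    rcases eq_or_ne i 0 with rfl | hi
    · simp
    · rw [Polynomial.coeff_C, if_neg hi]
      refine IsReduced.eq_zero _ (nilpotent_iff_mem_prime.mpr fun P hP => ?_)
    -- pass to the domain (R/P)[X]
      have hspan' :
          Ideal.span {Polynomial.C (Ideal.Quotient.mk P a)} =
            Ideal.span {f.map (Ideal.Quotient.mk P)} := by
        have := congrArg (Ideal.map (Polynomial.mapRingHom (Ideal.Quotient.mk P))) hspan
        simpa [Ideal.map_span] using this
      rw [Ideal.span_singleton_eq_span_singleton] at hspan'
      obtain ⟨u, hu⟩ := hspan'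
      have hu' := Polynomial.isUnit_iff_coeff_isUnit_isNilpotent.mp u.isUnit
      have hui : ((u : Polynomial (R ⧸ P))).coeff i = 0 := by
        have := hu'.2 i hi
        exact this.eq_zero
      have hz : (f.map (Ideal.Quotient.mk P)).coeff i = 0 := by
        rw [← hu, Polynomial.coeff_C_mul, hui, mul_zero]
      rw [Polynomial.coeff_map] at hz
      exact Ideal.Quotient.eq_zero_iff_mem.mp hz
  · intro h
    constructor
    intro x hx
    by_contra hx0
    have hnil : IsNilpotent (Polynomial.C x * Polynomial.X) :=
      (Commute.all _ _).isNilpotent_mul_right (hx.map Polynomial.C)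
    have hunit : IsUnit (1 + Polynomial.C x * Polynomial.X) := hnil.isUnit_one_add
    obtain ⟨b, hb⟩ := h 1 (1 + Polynomial.C x * Polynomial.X) (by
      rw [Polynomial.C_1, Ideal.span_singleton_one, Ideal.span_singleton_eq_top.mpr hunit])
    have hc := congrArg (fun p => Polynomial.coeff p 1) hb
    simp [Polynomial.coeff_one] at hc
    exact hx0 hc
end

section
/- Let R be a commutative ring and 0 ≠ f ∈ R[X]. Then f is m-irreducible in R[X] if and only if f is very strongly irreducible in R[X]. -/
open Polynomial

/-- `M a` is maximal among the proper principal ideals of `M`. -/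
def IsMIrreducible {M : Type*} [Monoid M] (a : M) : Prop :=
  ¬IsUnit a ∧ ∀ b : M, ¬IsUnit b → b ∣ a → a ∣ b

namespace IsMIrreducible

variable {M : Type*}

theorem of_irreducible [Monoid M] {a : M} (ha : Irreducible a) : IsMIrreducible a :=
  ⟨ha.not_isUnit, fun _ hb hba => ((ha.dvd_iff.mp hba).resolve_left hb).dvd⟩

variable [CommMonoid M] {a : M}

theorem of_dvd_of_dvd {b : M} (ha : IsMIrreducible a) (hab : a ∣ b) (hba : b ∣ a) :
    IsMIrreducible b :=
  ⟨fun hb => ha.1 (isUnit_of_dvd_unit hab hb),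
    fun c hc hcb => hba.trans (ha.2 c hc (hcb.trans hba))⟩

/-- A factorisation `a = b * c` into nonunits forces `a ∣ b` and `a ∣ c`, hence `a = a * a * t`,
and then `a * t` is an idempotent generating the same principal ideal as `a`. -/
theorem exists_isIdempotentElem_of_not_irreducible (ha : IsMIrreducible a)
    (hirr : ¬Irreducible a) : ∃ e : M, IsIdempotentElem e ∧ a ∣ e ∧ e ∣ a := by
  obtain ⟨b, c, rfl, hb, hc⟩ : ∃ b c, a = b * c ∧ ¬IsUnit b ∧ ¬IsUnit c := by
    simpa [irreducible_iff, ha.1, not_or] using hirr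
  obtain ⟨x, hx⟩ := ha.2 b hb (dvd_mul_right b c)
  obtain ⟨y, hy⟩ := ha.2 c hc (dvd_mul_left c b)
  have hregular : b * c * (b * c * (x * y)) = b * c := by
    calc b * c * (b * c * (x * y)) = (b * c * x) * (b * c * y) := by ac_rfl
      _ = b * c := by rw [← hx, ← hy]
  refine ⟨b * c * (x * y), ?_, dvd_mul_right _ _, Dvd.intro_left _ hregular⟩
  calc b * c * (x * y) * (b * c * (x * y)) = b * c * (b * c * (x * y)) * (x * y) := by ac_rfl
    _ = b * c * (x * y) := by rw [hregular]

end IsMIrreducible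

namespace Polynomial

variable {R : Type*} [CommRing R]

/-- `1 - X * q` is invertible in `R⟦X⟧`, into which `R[X]` embeds. -/
theorem eq_zero_of_mul_X_dvd_self {p : R[X]} (h : p * X ∣ p) : p = 0 := by
  obtain ⟨q, hq⟩ := h
  have hunit : IsUnit (1 - (PowerSeries.X : PowerSeries R) * q) := by
    simp [PowerSeries.isUnit_iff_constantCoeff]
  have hzero : (p : PowerSeries R) * (1 - PowerSeries.X * (q : PowerSeries R)) = 0 := by
    rw [mul_sub, mul_one, ← coe_X, ← mul_assoc, ← coe_mul, ← coe_mul, ← hq, sub_self]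
  rwa [hunit.mul_left_eq_zero, coe_eq_zero_iff] at hzero

/-- `e + (1 - e) * X` is a nonunit strictly above `e` in the divisibility order. -/
theorem not_isMIrreducible_of_isIdempotentElem {e : R[X]} (he : IsIdempotentElem e) :
    ¬IsMIrreducible e := by
  rintro ⟨he_unit, hmax⟩
  have hcompl_ne_zero : 1 - e ≠ 0 := fun h => he_unit (sub_eq_zero.mp h ▸ isUnit_one)
  set d := e + (1 - e) * X
  have hcompl : (1 - e) * d = (1 - e) * X := by
    linear_combination (X - 1 : R[X]) * he.eq
  have hde : d ∣ e := ⟨e, by linear_combination (X - 1 : R[X]) * he.eq⟩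
  have hd : ¬IsUnit d := fun hd =>
    hcompl_ne_zero <| eq_zero_of_mul_X_dvd_self <| hcompl ▸ hd.mul_right_dvd.mpr dvd_rfl
  obtain ⟨k, hk⟩ := hmax d hd hde
  refine hcompl_ne_zero <| isRegular_X.right ?_
  calc (1 - e) * X = (1 - e) * d := hcompl.symm
    _ = 0 := by linear_combination (1 - e) * hk - k * he.eq
    _ = 0 * X := (zero_mul X).symm

end Polynomial

theorem m_irreducible_iff_very_strongly_irreducible_general {R : Type*} [CommRing R]
    (f : Polynomial R) :
    (¬IsUnit f ∧ ∀ g : Polynomial R, ¬IsUnit g → g ∣ f → f ∣ g) ↔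
    (¬IsUnit f ∧ ∀ g h : Polynomial R, f = g * h → IsUnit g ∨ IsUnit h) := by
  -- Mathlib's `Irreducible` is the paper's very strong irreducibility.
  rw [← irreducible_iff]
  change IsMIrreducible f ↔ Irreducible f
  refine ⟨fun hf => ?_, IsMIrreducible.of_irreducible⟩
  by_contra hirr
  obtain ⟨e, he, hfe, hef⟩ := IsMIrreducible.exists_isIdempotentElem_of_not_irreducible hf hirr
  exact not_isMIrreducible_of_isIdempotentElem he (hf.of_dvd_of_dvd hfe hef)

theorem m_irreducible_iff_very_strongly_irreducible {R : Type*} [CommRing R]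
    (f : Polynomial R) (hf0 : f ≠ 0) :
    (¬IsUnit f ∧ ∀ g : Polynomial R, ¬IsUnit g → g ∣ f → f ∣ g) ↔
    (¬IsUnit f ∧ ∀ g h : Polynomial R, f = g * h → IsUnit g ∨ IsUnit h) :=
  m_irreducible_iff_very_strongly_irreducible_general f
end

section
/- Let R be a reduced commutative ring and f ∈ R[X] a nonzero very strongly irreducible element. Then f is a regular element of R[X] (not a zero divisor). -/
/-!
If `f` were a zero divisor, McCoy's theorem would give a nonzero constant `a` with `a f = 0`,
hence the factorisation `f = f * (1 + a X)`. As `f` is not a unit, `1 + a X` must be one, so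
`a` is nilpotent, which is impossible in a reduced ring.
-/

open Polynomial

section

variable {R : Type*} [CommRing R]

theorem Polynomial.mul_one_add_C_mul_X_of_smul_eq_zero {a : R} {f : R[X]} (h : a • f = 0) :
    f * (1 + C a * X) = f := by
  rw [mul_add, mul_one, mul_left_comm, ← smul_eq_C_mul, ← smul_mul_assoc, h, zero_mul, add_zero]

theorem Polynomial.isNilpotent_of_isUnit_one_add_C_mul_X {a : R} (h : IsUnit (1 + C a * X)) :
    IsNilpotent a := by
  simpa [coeff_one] using (isUnit_iff_coeff_isUnit_isNilpotent.1 h).2 1 one_ne_zero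

theorem Polynomial.isNilpotent_of_smul_eq_zero_of_factor_isUnit {f : R[X]} (hfu : ¬IsUnit f)
    (hvsi : ∀ g h : R[X], f = g * h → IsUnit g ∨ IsUnit h) {a : R} (ha : a • f = 0) :
    IsNilpotent a :=
  (hvsi _ _ (mul_one_add_C_mul_X_of_smul_eq_zero ha).symm).resolve_left hfu
    |> isNilpotent_of_isUnit_one_add_C_mul_X

end

theorem very_strongly_irreducible_regular_of_reduced_general {R : Type*} [CommRing R] [IsReduced R]
    (f : Polynomial R) (hfu : ¬IsUnit f)
    (hvsi : ∀ g h : Polynomial R, f = g * h → IsUnit g ∨ IsUnit h) :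
    ∀ g : Polynomial R, g * f = 0 → g = 0 := by
  intro g hgf
  by_contra hg
  obtain ⟨a, ha0, haf⟩ := Polynomial.notMem_nonZeroDivisors_iff.1 fun hf ↦
    hg (mem_nonZeroDivisors_iff_right.1 hf g hgf)
  exact ha0 (isNilpotent_of_smul_eq_zero_of_factor_isUnit hfu hvsi haf).eq_zero

theorem very_strongly_irreducible_regular_of_reduced {R : Type*} [CommRing R] [IsReduced R]
    (f : Polynomial R) (hf0 : f ≠ 0) (hfu : ¬IsUnit f)
    (hvsi : ∀ g h : Polynomial R, f = g * h → IsUnit g ∨ IsUnit h) :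
    ∀ g : Polynomial R, g * f = 0 → g = 0 :=
  very_strongly_irreducible_regular_of_reduced_general f hfu hvsi
end

section
/- Let R be a commutative ring such that R[X] is reduced and every nonzero nonunit of R[X] is a finite product of very strongly irreducible elements. Then R is an integral domain. -/
/-!
If `g * h = 0` then `g = g * (h * z + 1)` for every `z`, so the annihilator of a very strongly
irreducible element lies in the Jacobson radical. In `R[X]`, an element `f` of the Jacobson radical
makes `f * X + 1` a unit, which forces `f` to be nilpotent; hence a reduced polynomial ring has
zero Jacobson radical and its very strongly irreducible elements are non-zero-divisors. A nonzero
nonunit `a` of `R` is then a non-zero-divisor, because `C a` is a product of non-zero-divisors of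
`R[X]`.
-/

open Polynomial
open scoped nonZeroDivisors

def VeryStronglyIrreducible {S : Type*} [MonoidWithZero S] (a : S) : Prop :=
  a ≠ 0 ∧ ¬IsUnit a ∧ ∀ b c : S, a = b * c → IsUnit b ∨ IsUnit c

namespace VeryStronglyIrreducible

variable {S : Type*} [CommRing S] {g : S}

theorem mem_jacobson_bot_of_mul_eq_zero (hg : VeryStronglyIrreducible g) {h : S}
    (hgh : g * h = 0) : h ∈ Ideal.jacobson (⊥ : Ideal S) := by
  refine Ideal.mem_jacobson_bot.mpr fun z => ?_
  have hfac : g = g * (h * z + 1) := by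
    rw [mul_add, ← mul_assoc, hgh, zero_mul, zero_add, mul_one]
  exact (hg.2.2 g _ hfac).resolve_left hg.2.1

theorem mem_nonZeroDivisors (hS : Ideal.jacobson (⊥ : Ideal S) = ⊥)
    (hg : VeryStronglyIrreducible g) : g ∈ S⁰ :=
  mem_nonZeroDivisors_iff_left.mpr fun h hgh => by
    simpa [hS] using hg.mem_jacobson_bot_of_mul_eq_zero hgh

end VeryStronglyIrreducible

namespace Polynomial

variable {R : Type*} [CommRing R]

theorem isNilpotent_of_mem_jacobson_bot {f : R[X]} (hf : f ∈ Ideal.jacobson (⊥ : Ideal R[X])) :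
    IsNilpotent f := by
  have hunit : IsUnit (C 1 + X * f) := by
    simpa [mul_comm, add_comm] using Ideal.mem_jacobson_bot.mp hf X
  exact (isUnit_C_add_X_mul_iff.mp hunit).2

theorem jacobson_bot_eq_bot_of_isReduced [IsReduced R[X]] :
    Ideal.jacobson (⊥ : Ideal R[X]) = ⊥ :=
  eq_bot_iff.mpr fun _ hf => (isNilpotent_of_mem_jacobson_bot hf).eq_zero

end Polynomial

theorem domain_of_reduced_very_strongly_atomic_poly {R : Type*} [CommRing R] [Nontrivial R]
    (hred : IsReduced (Polynomial R))
    (hatomic : ∀ f : Polynomial R, f ≠ 0 → ¬IsUnit f →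
      ∃ l : Multiset (Polynomial R),
        (∀ g ∈ l, g ≠ 0 ∧ ¬IsUnit g ∧ ∀ b c : Polynomial R, g = b * c → IsUnit b ∨ IsUnit c) ∧
        l.prod = f) :
    IsDomain R := by
  have hjac : Ideal.jacobson (⊥ : Ideal R[X]) = ⊥ := jacobson_bot_eq_bot_of_isReduced
  have hnzd : NoZeroDivisors R := by
    refine noZeroDivisors_iff_forall_mem_nonZeroDivisors.mpr fun a ha => ?_
    by_cases hu : IsUnit a
    · exact hu.mem_nonZeroDivisors
    obtain ⟨l, hl, hprod⟩ := hatomic (C a) (C_ne_zero.mpr ha) (isUnit_C.not.mpr hu)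
    refine mem_nonZeroDivisors_of_injective C_injective (hprod ▸ multiset_prod_mem l fun g hg => ?_)
    exact VeryStronglyIrreducible.mem_nonZeroDivisors hjac (hl g hg)
  exact NoZeroDivisors.to_isDomain R
end

section
/- Let R be a commutative ring and X an indeterminate. Then 0 is an indecomposable element of R[X] if and only if R is an integral domain. -/
/-- A polynomial `f` is indecomposable if whenever `f = g * h`, then `g` or `h`
is strongly associate in `R[X]` to a constant polynomial. -/
def IndecPoly {R : Type*} [CommRing R] (f : Polynomial R) : Prop :=
  ∀ g h : Polynomial R, f = g * h →
    (∃ (a : R) (u : (Polynomial R)ˣ), g = Polynomial.C a * u) ∨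
    (∃ (a : R) (u : (Polynomial R)ˣ), h = Polynomial.C a * u)

open Polynomial in
lemma aux_CX_zero {R : Type*} [CommRing R] (a : R)
    (h : ∃ (r : R) (u : (Polynomial R)ˣ), C a * X = C r * (u : Polynomial R)) : a = 0 := by
  obtain ⟨r, u, hu⟩ := h
  have hu0 : IsUnit ((u : R[X]).coeff 0) := by
    apply IsUnit.of_mul_eq_one ((↑u⁻¹ : R[X]).coeff 0)
    rw [← Polynomial.mul_coeff_zero, Units.mul_inv, Polynomial.coeff_one_zero]
  have h0 : r * (u : R[X]).coeff 0 = 0 := by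
    have := congrArg (fun p => Polynomial.coeff p 0) hu
    simpa [Polynomial.coeff_C_mul] using this.symm
  have hr : r = 0 := by
    obtain ⟨v, hv⟩ := hu0
    have := congrArg (· * (↑v⁻¹ : R)) h0
    simpa [mul_assoc, ← hv] using this
  have := congrArg (fun p => Polynomial.coeff p 1) hu
  simpa [hr, Polynomial.coeff_C_mul] using this

theorem zero_indecomposable_iff_domain {R : Type*} [CommRing R] [Nontrivial R] :
    IndecPoly (0 : Polynomial R) ↔ IsDomain R := by
  constructor
  · intro hind
    have : NoZeroDivisors R := by
      constructor
      intro a b hab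
      by_contra hcon
      push_neg at hcon
      rcases hind (Polynomial.C a * Polynomial.X) (Polynomial.C b * Polynomial.X) (by
        have : Polynomial.C a * Polynomial.X * (Polynomial.C b * Polynomial.X)
            = Polynomial.C (a * b) * (Polynomial.X * Polynomial.X) := by ring_nf; rw [Polynomial.C_mul]; ring
        rw [this, hab]; simp) with h | h
      · exact hcon.1 (aux_CX_zero a h)
      · exact hcon.2 (aux_CX_zero b h)
    exact NoZeroDivisors.to_isDomain R
  · intro hdom g h hgh
    rcases mul_eq_zero.mp hgh.symm with h0 | h0
    · left; exact ⟨0, 1, by simp [h0]⟩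
    · right; exact ⟨0, 1, by simp [h0]⟩
end

section
/- Let R be a commutative ring and suppose f ∈ R[X] is a nonunit factor of X^n for some n ≥ 1. Then f is indecomposable if and only if f is very strongly irreducible. -/
/-! A divisor of `X ^ n` is never zero (unless `R` is trivial), and a constant dividing `X ^ n`
is a unit because it divides the leading coefficient `1`. So a divisor of `X ^ n` of the form
`C a * u`, with `u` a unit, is itself a unit: for such `f`, indecomposability and very strong
irreducibility coincide. -/

open Polynomial

section DvdXPow

variable {R : Type*} [CommSemiring R] {n : ℕ}

theorem Polynomial.isUnit_of_C_dvd_X_pow {a : R} (h : C a ∣ X ^ n) : IsUnit a := by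
  have ha : a ∣ (X ^ n : R[X]).coeff n := (C_dvd_iff_dvd_coeff a _).mp h n
  rw [coeff_X_pow_self] at ha
  exact isUnit_of_dvd_one ha

theorem Polynomial.isUnit_of_dvd_X_pow_of_eq_C_mul {g : R[X]} (hg : g ∣ X ^ n) {a : R}
    {u : R[X]ˣ} (hgu : g = C a * u) : IsUnit g := by
  have ha : IsUnit a := isUnit_of_C_dvd_X_pow ((Dvd.intro _ hgu.symm).trans hg)
  rw [hgu]
  exact (isUnit_C.mpr ha).mul u.isUnit

theorem Polynomial.ne_zero_of_dvd_X_pow {f : R[X]} (hf : ¬IsUnit f) (hdvd : f ∣ X ^ n) :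
    f ≠ 0 := by
  rintro rfl
  have : Subsingleton R := monic_zero_iff_subsingleton.mp (zero_dvd_iff.mp hdvd ▸ monic_X_pow n)
  exact hf (isUnit_of_subsingleton _)

end DvdXPow

section IndecPoly

variable {R : Type*} [CommRing R] {f : R[X]}

theorem IndecPoly.of_isUnit_or_isUnit (hf : ∀ g h : R[X], f = g * h → IsUnit g ∨ IsUnit h) :
    IndecPoly f := by
  have hC : ∀ g : R[X], IsUnit g → ∃ (a : R) (u : R[X]ˣ), g = C a * u :=
    fun g hg => ⟨1, hg.unit, by rw [map_one, one_mul, hg.unit_spec]⟩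
  intro g h hgh
  exact (hf g h hgh).imp (hC g) (hC h)

theorem IndecPoly.isUnit_or_isUnit_of_dvd_X_pow (hf : IndecPoly f) {n : ℕ} (hdvd : f ∣ X ^ n)
    {g h : R[X]} (hgh : f = g * h) : IsUnit g ∨ IsUnit h := by
  rcases hf g h hgh with ⟨a, u, hg⟩ | ⟨a, u, hh⟩
  · exact .inl (isUnit_of_dvd_X_pow_of_eq_C_mul ((Dvd.intro h hgh.symm).trans hdvd) hg)
  · exact .inr (isUnit_of_dvd_X_pow_of_eq_C_mul ((Dvd.intro_left g hgh.symm).trans hdvd) hh)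

end IndecPoly

theorem factor_of_Xn_indecomposable_iff_vsi {R : Type*} [CommRing R]
    (f : Polynomial R) (hfu : ¬IsUnit f)
    (hdvd : ∃ (n : ℕ) (g : Polynomial R), 1 ≤ n ∧ (Polynomial.X : Polynomial R) ^ n = f * g) :
    IndecPoly f ↔
      (f ≠ 0 ∧ ∀ g h : Polynomial R, f = g * h → IsUnit g ∨ IsUnit h) := by
  obtain ⟨n, w, -, hw⟩ := hdvd
  have hfX : f ∣ X ^ n := Dvd.intro w hw.symm
  exact ⟨fun hf => ⟨ne_zero_of_dvd_X_pow hfu hfX,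
      fun _ _ hgh => hf.isUnit_or_isUnit_of_dvd_X_pow hfX hgh⟩,
    fun hf => IndecPoly.of_isUnit_or_isUnit hf.2⟩
end

section
/- Let R be a commutative ring. Some power X^n (n ≥ 1) is a finite product of prime elements of R[X] if and only if R is a finite direct product of integral domains. -/
open Polynomial

universe u

namespace XnAux

/-- The "finite product of domains" predicate, matching the RHS of the theorem. -/
def FPD (R : Type u) [CommRing R] : Prop :=
  ∃ (m : ℕ) (D : Fin m → Type u) (inst : ∀ i, CommRing (D i)),
    letI : ∀ i, CommRing (D i) := inst
    (∀ i, IsDomain (D i)) ∧ Nonempty (R ≃+* ∀ i, D i)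

theorem fpd_congr {R S : Type u} [CommRing R] [CommRing S] (e : R ≃+* S) (h : FPD S) : FPD R := by
  obtain ⟨m, D, inst, hdom, ⟨f⟩⟩ := h
  exact ⟨m, D, inst, hdom, ⟨e.trans f⟩⟩

theorem fpd_of_subsingleton (R : Type u) [CommRing R] [Subsingleton R] : FPD R := by
  refine ⟨0, fun _ => PUnit, fun _ => inferInstance, fun i => i.elim0, ⟨?_⟩⟩
  exact
  { toFun := fun _ i => i.elim0
    invFun := fun _ => 0
    left_inv := fun x => Subsingleton.elim _ _
    right_inv := fun f => funext fun i => i.elim0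
    map_mul' := fun _ _ => funext fun i => i.elim0
    map_add' := fun _ _ => funext fun i => i.elim0 }

theorem fpd_of_isDomain (R : Type u) [CommRing R] [IsDomain R] : FPD R := by
  refine ⟨1, fun _ => R, fun _ => inferInstance, fun _ => inferInstance, ⟨?_⟩⟩
  exact
  { toFun := fun r _ => r
    invFun := fun f => f 0
    left_inv := fun r => rfl
    right_inv := fun f => funext fun i => congrArg f (Subsingleton.elim 0 i)
    map_mul' := fun _ _ => rfl
    map_add' := fun _ _ => rfl }

/-- `Equiv.sumPiEquivProdPi` as a ring equiv. -/
def ringEquivSumPi {ι κ : Type*} (F : ι ⊕ κ → Type*) [∀ s, CommRing (F s)] :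
    (∀ s, F s) ≃+* (∀ i, F (Sum.inl i)) × (∀ j, F (Sum.inr j)) :=
  { Equiv.sumPiEquivProdPi F with
    map_mul' := fun _ _ => rfl
    map_add' := fun _ _ => rfl }

theorem fpd_prod {A B : Type u} [CommRing A] [CommRing B] (hA : FPD A) (hB : FPD B) :
    FPD (A × B) := by
  obtain ⟨mA, DA, iA, dA, ⟨fA⟩⟩ := hA
  obtain ⟨mB, DB, iB, dB, ⟨fB⟩⟩ := hB
  letI : ∀ i, CommRing (DA i) := iA
  letI : ∀ i, CommRing (DB i) := iB
  let F : Fin mA ⊕ Fin mB → Type u := Sum.elim DA DB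
  letI instF : ∀ s, CommRing (F s) := fun s => Sum.rec (fun i => iA i) (fun j => iB j) s
  have domF : ∀ s, IsDomain (F s) := fun s => Sum.rec (fun i => dA i) (fun j => dB j) s
  refine ⟨mA + mB, fun k => F (finSumFinEquiv.symm k), fun k => instF _, fun k => domF _, ⟨?_⟩⟩
  refine ((RingEquiv.prodCongr fA fB).trans (ringEquivSumPi F).symm).trans ?_
  exact RingEquiv.piCongrLeft' F finSumFinEquiv

theorem idem_eq_one_of_isUnit {R : Type*} [CommRing R] {e : R} (he : e * e = e)
    (h : IsUnit e) : e = 1 := by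
  obtain ⟨c, hc⟩ := isUnit_iff_exists_inv.mp h
  linear_combination c * he - (e - 1) * hc

theorem prime_map_of_ker_le {S T : Type*} [CommRing S] [CommRing T] (f : S →+* T)
    (hf : Function.Surjective f) {p : S} (hp : Prime p)
    (hker : ∀ x, f x = 0 → p ∣ x) (hne : f p ≠ 0) : Prime (f p) := by
  refine ⟨hne, ?_, ?_⟩
  · intro h
    obtain ⟨c, hc⟩ := isUnit_iff_exists_inv.mp h
    obtain ⟨s, rfl⟩ := hf c
    have h0 : f (p * s - 1) = 0 := by rw [map_sub, map_mul, hc, map_one, sub_self]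
    obtain ⟨t, ht⟩ := hker _ h0
    exact hp.not_isUnit (IsUnit.of_mul_eq_one (a := p) (s - t) (by linear_combination ht))
  · intro x y hxy
    obtain ⟨a, rfl⟩ := hf x
    obtain ⟨b, rfl⟩ := hf y
    obtain ⟨c, hc⟩ := hxy
    obtain ⟨d, rfl⟩ := hf c
    have h0 : f (a * b - p * d) = 0 := by
      rw [map_sub, map_mul, map_mul]
      rw [← hc]; ring
    obtain ⟨t, ht⟩ := hker _ h0
    rcases hp.2.2 a b ⟨d + t, by linear_combination ht⟩ with h | h
    · exact Or.inl (map_dvd f h)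
    · exact Or.inr (map_dvd f h)

theorem not_isUnit_X_pow {R : Type*} [CommRing R] [Nontrivial R] {n : ℕ} (hn : 1 ≤ n) :
    ¬ IsUnit ((X : R[X]) ^ n) := by
  intro h
  obtain ⟨v, hv⟩ := isUnit_iff_exists_inv.mp h
  have := congrArg (fun f => Polynomial.coeff f 0) hv
  simp only [Polynomial.mul_coeff_zero, Polynomial.coeff_X_pow, Polynomial.coeff_one] at this
  rw [if_neg (by omega)] at this
  simp at this

theorem isUnit_multiset_prod {M : Type*} [CommMonoid M] (s : Multiset M)
    (h : ∀ x ∈ s, IsUnit x) : IsUnit s.prod := by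
  induction s using Multiset.induction_on with
  | empty => simp
  | cons a s ih =>
    rw [Multiset.prod_cons]
    exact (h a (Multiset.mem_cons_self a s)).mul (ih fun x hx => h x (Multiset.mem_cons_of_mem hx))

/-- Key descent step: given a decomposition `e + f = 1`, `e * f = 0`, push a prime
factorization of `X ^ n` from `R[X]` to `(R ⧸ span {e})[X]`, with strictly fewer factors. -/
theorem step {R : Type u} [CommRing R] {e f : R} (hef : e * f = 0) (hef1 : e + f = 1)
    {n : ℕ} (hn : 1 ≤ n) (l : Multiset R[X]) (hprime : ∀ p ∈ l, Prime p)
    (hprod : l.prod = X ^ n)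
    (hA : Nontrivial (R ⧸ Ideal.span {e})) (hB : Nontrivial (R ⧸ Ideal.span {f})) :
    ∃ l' : Multiset (Polynomial (R ⧸ Ideal.span {e})),
      l'.card < l.card ∧ (∀ p ∈ l', Prime p) ∧ l'.prod = X ^ n := by
  classical
  set I := Ideal.span {e} with hI
  set π : R[X] →+* Polynomial (R ⧸ I) := Polynomial.mapRingHom (Ideal.Quotient.mk I) with hπ
  have hsurj : Function.Surjective π := Polynomial.map_surjective _ Ideal.Quotient.mk_surjective
  have hker : ∀ g : R[X], π g = 0 → Polynomial.C e ∣ g := by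
    intro g hg
    rw [Polynomial.C_dvd_iff_dvd_coeff]
    intro i
    have h1 : (Polynomial.map (Ideal.Quotient.mk I) g).coeff i = 0 := by
      rw [show Polynomial.map (Ideal.Quotient.mk I) g = π g from rfl, hg]; simp
    rw [Polynomial.coeff_map] at h1
    rw [← Ideal.mem_span_singleton]
    exact Ideal.Quotient.eq_zero_iff_mem.mp h1
  have hCf1 : π (Polynomial.C f) = 1 := by
    rw [hπ, Polynomial.coe_mapRingHom, Polynomial.map_C]
    have : Ideal.Quotient.mk I f = 1 := by
      rw [← map_one (Ideal.Quotient.mk I), Ideal.Quotient.mk_eq_mk_iff_sub_mem]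
      have : f - 1 = -e := by linear_combination hef1
      rw [this]
      exact neg_mem (Ideal.mem_span_singleton.mpr dvd_rfl)
    rw [this, Polynomial.C_1]
  have hsplit : ∀ p ∈ l, p ∣ Polynomial.C e ∨ p ∣ Polynomial.C f := by
    intro p hp
    refine (hprime p hp).2.2 _ _ ?_
    have : Polynomial.C e * Polynomial.C f = 0 := by
      rw [← Polynomial.C_mul, hef, Polynomial.C_0]
    rw [this]
    exact dvd_zero p
  set l₁ := l.filter (· ∣ Polynomial.C e) with hl₁def
  set l₂ := l.filter (fun p => ¬ (p ∣ Polynomial.C e)) with hl₂def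
  have hl : l₁ + l₂ = l := Multiset.filter_add_not _ l
  -- images of l₂ are units
  have hunit : ∀ p ∈ l₂, IsUnit (π p) := by
    intro p hp
    have hpl := (Multiset.mem_filter.mp hp).1
    have hnd : ¬ (p ∣ Polynomial.C e) := (Multiset.mem_filter.mp hp).2
    rcases hsplit p hpl with h | h
    · exact absurd h hnd
    · exact isUnit_of_dvd_unit (map_dvd π h) (hCf1 ▸ isUnit_one)
  -- X^n ≠ 0 and prod identity in the quotient
  have hXn : ((Multiset.map (⇑π) l).prod : Polynomial (R ⧸ I)) = X ^ n := by
    rw [← map_multiset_prod, hprod]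
    simp [hπ]
  have hXn0 : ((X : Polynomial (R ⧸ I)) ^ n) ≠ 0 := by
    intro h
    have := congrArg (fun g => Polynomial.coeff g n) h
    simp [Polynomial.coeff_X_pow] at this
  -- images of l₁ are prime
  have hprimeim : ∀ p ∈ l₁, Prime (π p) := by
    intro p hp
    have hpl := (Multiset.mem_filter.mp hp).1
    have hdvd : p ∣ Polynomial.C e := (Multiset.mem_filter.mp hp).2
    refine prime_map_of_ker_le π hsurj (hprime p hpl)
      (fun x hx => dvd_trans hdvd (hker x hx)) ?_
    intro h0
    have hd : π p ∣ (X : Polynomial (R ⧸ I)) ^ n := by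
      rw [← hXn]
      exact Multiset.dvd_prod (Multiset.mem_map_of_mem _ hpl)
    rw [h0] at hd
    exact hXn0 (zero_dvd_iff.mp hd)
  -- l₂ is nonempty (else everything is a unit mod f)
  have hl₂ne : l₂ ≠ 0 := by
    intro h0
    -- then every p ∈ l divides C e, so mod f everything is a unit
    set π' : R[X] →+* Polynomial (R ⧸ Ideal.span {f}) :=
      Polynomial.mapRingHom (Ideal.Quotient.mk (Ideal.span {f})) with hπ'
    have hCe1 : π' (Polynomial.C e) = 1 := by
      rw [hπ', Polynomial.coe_mapRingHom, Polynomial.map_C]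
      have : Ideal.Quotient.mk (Ideal.span {f}) e = 1 := by
        rw [← map_one (Ideal.Quotient.mk (Ideal.span {f})), Ideal.Quotient.mk_eq_mk_iff_sub_mem]
        have : e - 1 = -f := by linear_combination hef1
        rw [this]
        exact neg_mem (Ideal.mem_span_singleton.mpr dvd_rfl)
      rw [this, Polynomial.C_1]
    have hall : ∀ p ∈ l, IsUnit (π' p) := by
      intro p hp
      have hp1 : p ∈ l₁ := by
        rw [← hl, h0, add_zero] at hp; exact hp
      have hdvd : p ∣ Polynomial.C e := (Multiset.mem_filter.mp hp1).2
      exact isUnit_of_dvd_unit (map_dvd π' hdvd) (hCe1 ▸ isUnit_one)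
    have hX' : ((Multiset.map (⇑π') l).prod : Polynomial (R ⧸ Ideal.span {f})) = X ^ n := by
      rw [← map_multiset_prod, hprod]
      simp [hπ']
    have : IsUnit ((X : Polynomial (R ⧸ Ideal.span {f})) ^ n) := by
      rw [← hX']
      exact isUnit_multiset_prod _ (by
        intro x hx
        obtain ⟨p, hp, rfl⟩ := Multiset.mem_map.mp hx
        exact hall p hp)
    exact not_isUnit_X_pow hn this
  -- l₁ is nonempty
  have hl₁ne : l₁ ≠ 0 := by
    intro h0
    have : IsUnit ((X : Polynomial (R ⧸ I)) ^ n) := by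
      rw [← hXn, ← hl, h0, zero_add]
      exact isUnit_multiset_prod _ (by
        intro x hx
        obtain ⟨p, hp, rfl⟩ := Multiset.mem_map.mp hx
        exact hunit p hp)
    exact not_isUnit_X_pow hn this
  obtain ⟨p₀, hp₀⟩ := Multiset.exists_mem_of_ne_zero hl₁ne
  set l₁' := l₁.erase p₀ with hl₁'
  have hcons : l₁ = p₀ ::ₘ l₁' := (Multiset.cons_erase hp₀).symm
  set w := (l₂.map (⇑π)).prod with hw
  have hwu : IsUnit w := isUnit_multiset_prod _ (by
    intro x hx
    obtain ⟨p, hp, rfl⟩ := Multiset.mem_map.mp hx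
    exact hunit p hp)
  refine ⟨(w * π p₀) ::ₘ l₁'.map (⇑π), ?_, ?_, ?_⟩
  · -- cardinality
    have h1 : (l₁'.map (⇑π)).card = l₁'.card := Multiset.card_map _ _
    have h2 : l.card = l₁.card + l₂.card := by rw [← hl, Multiset.card_add]
    have h3 : l₁.card = l₁'.card + 1 := by rw [hcons, Multiset.card_cons]
    have h4 : 0 < l₂.card := Multiset.card_pos.mpr hl₂ne
    rw [Multiset.card_cons, h1]
    omega
  · -- primality
    intro x hx
    rcases Multiset.mem_cons.mp hx with rfl | hx
    · have hp₀p : Prime (π p₀) := hprimeim p₀ hp₀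
      exact (associated_unit_mul_left (π p₀) w hwu).symm.prime hp₀p
    · obtain ⟨p, hp, rfl⟩ := Multiset.mem_map.mp hx
      exact hprimeim p (hcons ▸ Multiset.mem_cons_of_mem hp)
  · -- product
    rw [Multiset.prod_cons]
    have : (l₁'.map (⇑π)).prod * π p₀ = (l₁.map (⇑π)).prod := by
      rw [hcons, Multiset.map_cons, Multiset.prod_cons]; ring
    calc w * π p₀ * (l₁'.map (⇑π)).prod
        = (l₁.map (⇑π)).prod * (l₂.map (⇑π)).prod := by rw [← this, hw]; ring
      _ = ((l₁ + l₂).map (⇑π)).prod := by rw [Multiset.map_add, Multiset.prod_add]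
      _ = X ^ n := by rw [hl, hXn]


theorem fpd_main (k : ℕ) : ∀ (R : Type u) [CommRing R] (n : ℕ) (l : Multiset (Polynomial R)),
    l.card ≤ k → 1 ≤ n → (∀ p ∈ l, Prime p) → l.prod = X ^ n → FPD R := by
  induction k with
  | zero =>
    intro R _ n l hcard hn hprime hprod
    rcases subsingleton_or_nontrivial R with hs | hnt
    · exact fpd_of_subsingleton R
    · exfalso
      have hl0 : l = 0 := Multiset.card_eq_zero.mp (Nat.le_zero.mp hcard)
      rw [hl0, Multiset.prod_zero] at hprod
      have := congrArg (fun g => Polynomial.coeff g 0) hprod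
      simp only [Polynomial.coeff_one, Polynomial.coeff_X_pow] at this
      rw [if_pos trivial, if_neg (by omega)] at this
      exact one_ne_zero this
  | succ k IH =>
    intro R _ n l hcard hn hprime hprod
    rcases subsingleton_or_nontrivial R with hs | hnt
    · exact fpd_of_subsingleton R
    rcases eq_or_ne l 0 with rfl | hlne
    · exfalso
      rw [Multiset.prod_zero] at hprod
      have := congrArg (fun g => Polynomial.coeff g 0) hprod
      simp only [Polynomial.coeff_one, Polynomial.coeff_X_pow] at this
      rw [if_pos trivial, if_neg (by omega)] at this
      exact one_ne_zero this
    obtain ⟨p, hpl⟩ := Multiset.exists_mem_of_ne_zero hlne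
    have hpprime := hprime p hpl
    have hpX : p ∣ (X : R[X]) := by
      refine hpprime.dvd_of_dvd_pow (n := n) ?_
      rw [← hprod]
      exact Multiset.dvd_prod hpl
    obtain ⟨q, hq⟩ := hpX
    have hab : p.coeff 0 * q.coeff 0 = 0 := by
      have := congrArg (fun g => Polynomial.coeff g 0) hq
      simpa [Polynomial.mul_coeff_zero] using this.symm
    have h1 : p.coeff 0 * q.coeff 1 + p.coeff 1 * q.coeff 0 = 1 := by
      have h := congrArg (fun g => Polynomial.coeff g 1) hq
      simp only [Polynomial.coeff_X_one, Polynomial.coeff_mul,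
        Finset.Nat.sum_antidiagonal_eq_sum_range_succ_mk] at h
      rw [Finset.sum_range_succ, Finset.sum_range_one] at h
      simpa using h.symm
    set e := p.coeff 0 * q.coeff 1 with he_def
    have he : e * e = e := by
      linear_combination (p.coeff 0 * q.coeff 1) * h1 -
        (q.coeff 1 * p.coeff 1) * hab
    by_cases he1 : e = 1
    · -- impossible: p would be a unit times ... leads to p unit
      exfalso
      have hb : q.coeff 0 = 0 := by
        linear_combination q.coeff 1 * hab - q.coeff 0 * he1
      obtain ⟨q', rfl⟩ := Polynomial.X_dvd_iff.mpr hb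
      have hc : (1 : R[X]) = p * q' := by
        refine Polynomial.ext fun j => ?_
        have hx : X * (1 : R[X]) = X * (p * q') := by
          rw [mul_one]
          conv_lhs => rw [hq]
          ring
        have := congrArg (fun g => Polynomial.coeff g (j + 1)) hx
        simp only [Polynomial.coeff_X_mul] at this
        exact this
      exact hpprime.not_isUnit (IsUnit.of_mul_eq_one (a := p) q' hc.symm)
    by_cases he0 : e = 0
    · -- X is prime, R is a domain
      have hpb : p.coeff 1 * q.coeff 0 = 1 := by linear_combination h1 - he0
      have ha : p.coeff 0 = 0 := by
        linear_combination p.coeff 1 * hab - p.coeff 0 * hpb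
      obtain ⟨p', rfl⟩ := Polynomial.X_dvd_iff.mpr ha
      have hc : (1 : R[X]) = p' * q := by
        refine Polynomial.ext fun j => ?_
        have hx : X * (1 : R[X]) = X * (p' * q) := by
          rw [mul_one]
          conv_lhs => rw [hq]
          ring
        have := congrArg (fun g => Polynomial.coeff g (j + 1)) hx
        simp only [Polynomial.coeff_X_mul] at this
        exact this
      have hqu : IsUnit q := IsUnit.of_mul_eq_one (a := q) p' (by linear_combination -hc)
      have hassoc : Associated (X * p') (X : R[X]) := by
        have h := associated_mul_unit_left (X * p') q hqu
        rw [← hq] at h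
        exact h.symm
      have hXprime : Prime (X : R[X]) := hassoc.prime hpprime
      haveI : (Ideal.span {(X : R[X])}).IsPrime :=
        (Ideal.span_singleton_prime Polynomial.X_ne_zero).mpr hXprime
      haveI : IsDomain (R[X] ⧸ Ideal.span {(X : R[X])}) := Ideal.Quotient.isDomain _
      haveI : IsDomain R := by
        refine Function.Injective.isDomain
          ((Ideal.Quotient.mk (Ideal.span {(X : R[X])})).comp Polynomial.C) ?_
        rw [injective_iff_map_eq_zero]
        intro r hr
        have : Polynomial.C r ∈ Ideal.span {(X : R[X])} := by
          rwa [RingHom.comp_apply, Ideal.Quotient.eq_zero_iff_mem] at hr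
        obtain ⟨g, hg⟩ := Ideal.mem_span_singleton.mp this
        have := congrArg (fun h => Polynomial.coeff h 0) hg
        simpa [Polynomial.mul_coeff_zero] using this
      exact fpd_of_isDomain R
    · -- proper idempotent: split the ring and recurse
      set f := 1 - e with hf_def
      have hef : e * f = 0 := by linear_combination -he
      have hef1 : e + f = 1 := by rw [hf_def]; ring
      set I := Ideal.span {e} with hI
      set J := Ideal.span {f} with hJ
      -- both quotients nontrivial
      have hAnt : Nontrivial (R ⧸ I) := by
        rcases subsingleton_or_nontrivial (R ⧸ I) with hs | h
        · exfalso
          have htop : I = ⊤ := Ideal.Quotient.subsingleton_iff.mp hs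
          have : IsUnit e := Ideal.span_singleton_eq_top.mp htop
          exact he1 (idem_eq_one_of_isUnit he this)
        · exact h
      have hBnt : Nontrivial (R ⧸ J) := by
        rcases subsingleton_or_nontrivial (R ⧸ J) with hs | h
        · exfalso
          have htop : J = ⊤ := Ideal.Quotient.subsingleton_iff.mp hs
          have hfu : IsUnit f := Ideal.span_singleton_eq_top.mp htop
          have hff : f * f = f := by rw [hf_def]; linear_combination he
          have : f = 1 := idem_eq_one_of_isUnit hff hfu
          exact he0 (by linear_combination -this)
        · exact h
      -- descend on both sides
      obtain ⟨lA, hlAcard, hlAprime, hlAprod⟩ :=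
        step hef hef1 hn l hprime hprod hAnt hBnt
      have hfe : f * e = 0 := by linear_combination hef
      have hfe1 : f + e = 1 := by linear_combination hef1
      obtain ⟨lB, hlBcard, hlBprime, hlBprod⟩ :=
        step hfe hfe1 hn l hprime hprod hBnt hAnt
      have hFA : FPD (R ⧸ I) := IH _ n lA (by omega) hn hlAprime hlAprod
      have hFB : FPD (R ⧸ J) := IH _ n lB (by omega) hn hlBprime hlBprod
      -- R ≃+* (R ⧸ I) × (R ⧸ J)
      have hcop : IsCoprime I J :=
        Ideal.isCoprime_iff_exists.mpr
          ⟨e, Ideal.mem_span_singleton.mpr dvd_rfl, f, Ideal.mem_span_singleton.mpr dvd_rfl, hef1⟩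
      have hbot : I ⊓ J = ⊥ := by
        rw [eq_bot_iff]
        rintro x hx
        obtain ⟨hxI, hxJ⟩ := Submodule.mem_inf.mp hx
        obtain ⟨r, hr⟩ := Ideal.mem_span_singleton'.mp hxI
        obtain ⟨s, hs⟩ := Ideal.mem_span_singleton'.mp hxJ
        have hx0 : x = 0 := by
          have h1 : f * x = 0 := by
            rw [← hr]; linear_combination r * hfe
          have h2 : e * x = 0 := by
            rw [← hs]; linear_combination s * hef
          linear_combination h1 + h2 - x * hef1
        simp [hx0]
      have Φ : R ≃+* (R ⧸ I) × (R ⧸ J) :=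
        ((RingEquiv.quotientBot R).symm.trans (Ideal.quotEquivOfEq hbot.symm)).trans
          (Ideal.quotientInfEquivQuotientProd I J hcop)
      exact fpd_congr Φ (fpd_prod hFA hFB)

theorem prime_inl {A B : Type*} [CommRing A] [CommRing B] {p : A} (hp : Prime p) :
    Prime ((p, 1) : A × B) := by
  refine ⟨fun h => hp.ne_zero (congrArg Prod.fst h), fun h => hp.not_unit (h.map (RingHom.fst A B)), ?_⟩
  intro x y ⟨c, hc⟩
  have h1 : x.1 * y.1 = p * c.1 := congrArg Prod.fst hc
  rcases hp.2.2 x.1 y.1 ⟨c.1, h1⟩ with ⟨d, hd⟩ | ⟨d, hd⟩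
  · exact Or.inl ⟨(d, x.2), Prod.ext hd (one_mul x.2).symm⟩
  · exact Or.inr ⟨(d, y.2), Prod.ext hd (one_mul y.2).symm⟩

theorem prime_inr {A B : Type*} [CommRing A] [CommRing B] {p : B} (hp : Prime p) :
    Prime ((1, p) : A × B) := by
  refine ⟨fun h => hp.ne_zero (congrArg Prod.snd h), fun h => hp.not_unit (h.map (RingHom.snd A B)), ?_⟩
  intro x y ⟨c, hc⟩
  have h1 : x.2 * y.2 = p * c.2 := congrArg Prod.snd hc
  rcases hp.2.2 x.2 y.2 ⟨c.2, h1⟩ with ⟨d, hd⟩ | ⟨d, hd⟩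
  · exact Or.inl ⟨(x.1, d), Prod.ext (one_mul x.1).symm hd⟩
  · exact Or.inr ⟨(y.1, d), Prod.ext (one_mul y.1).symm hd⟩

/-- Polynomials over a product ring are the product of the polynomial rings. -/
noncomputable def polyProdRE (A B : Type u) [CommRing A] [CommRing B] :
    Polynomial (A × B) ≃+* Polynomial A × Polynomial B := by
  refine RingEquiv.ofBijective
    ((Polynomial.mapRingHom (RingHom.fst A B)).prod (Polynomial.mapRingHom (RingHom.snd A B)))
    ⟨?_, ?_⟩
  · intro g₁ g₂ h
    simp only [RingHom.prod_apply, Prod.mk.injEq, Polynomial.coe_mapRingHom] at h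
    refine Polynomial.ext fun j => ?_
    have h1 := congrArg (fun t => Polynomial.coeff t j) h.1
    have h2 := congrArg (fun t => Polynomial.coeff t j) h.2
    simp only [Polynomial.coeff_map] at h1 h2
    exact Prod.ext h1 h2
  · rintro ⟨p, q⟩
    refine ⟨p.sum (fun j a => Polynomial.C (a, (0 : B)) * X ^ j) +
      q.sum (fun j b => Polynomial.C ((0 : A), b) * X ^ j), ?_⟩
    simp only [RingHom.prod_apply, Polynomial.coe_mapRingHom, Polynomial.map_add, Prod.mk.injEq]
    constructor
    · rw [Polynomial.sum_def, Polynomial.sum_def, Polynomial.map_sum, Polynomial.map_sum]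
      simp only [Polynomial.map_mul, Polynomial.map_C, Polynomial.map_pow, Polynomial.map_X]
      simp only [RingHom.coe_fst, RingHom.coe_snd, Polynomial.C_0, zero_mul, map_zero]
      rw [Finset.sum_const_zero, add_zero]
      simp_rw [Polynomial.C_mul_X_pow_eq_monomial]
      exact (Polynomial.as_sum_support p).symm
    · rw [Polynomial.sum_def, Polynomial.sum_def, Polynomial.map_sum, Polynomial.map_sum]
      simp only [Polynomial.map_mul, Polynomial.map_C, Polynomial.map_pow, Polynomial.map_X]
      simp only [RingHom.coe_fst, RingHom.coe_snd, Polynomial.C_0, zero_mul, map_zero]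
      rw [Finset.sum_const_zero, zero_add]
      simp_rw [Polynomial.C_mul_X_pow_eq_monomial]
      exact (Polynomial.as_sum_support q).symm


theorem primes_prod_ring {A B : Type u} [CommRing A] [CommRing B]
    (hA : ∃ n, 1 ≤ n ∧ ∃ l : Multiset A[X], (∀ p ∈ l, Prime p) ∧ l.prod = X ^ n)
    (hB : ∃ n, 1 ≤ n ∧ ∃ l : Multiset B[X], (∀ p ∈ l, Prime p) ∧ l.prod = X ^ n) :
    ∃ n, 1 ≤ n ∧ ∃ l : Multiset (Polynomial (A × B)), (∀ p ∈ l, Prime p) ∧ l.prod = X ^ n := by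
  obtain ⟨nA, hnA, lA, hpA, hlA⟩ := hA
  obtain ⟨nB, hnB, lB, hpB, hlB⟩ := hB
  set E := polyProdRE A B with hE
  have hnAB : 1 ≤ nA * nB := Nat.one_le_iff_ne_zero.mpr (Nat.mul_ne_zero (by omega) (by omega))
  set L : Multiset (Polynomial A × Polynomial B) :=
    ((nB • lA).map (fun p => (p, (1 : B[X])))) + ((nA • lB).map (fun q => ((1 : A[X]), q))) with hL
  refine ⟨nA * nB, hnAB, L.map (⇑E.symm), ?_, ?_⟩
  · intro x hx
    obtain ⟨z, hz, rfl⟩ := Multiset.mem_map.mp hx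
    have hzp : Prime z := by
      rcases Multiset.mem_add.mp hz with h | h
      · obtain ⟨u, hu, rfl⟩ := Multiset.mem_map.mp h
        exact prime_inl (hpA u (Multiset.mem_nsmul.mp hu).2)
      · obtain ⟨u, hu, rfl⟩ := Multiset.mem_map.mp h
        exact prime_inr (hpB u (Multiset.mem_nsmul.mp hu).2)
    exact (MulEquiv.prime_iff E.symm.toMulEquiv).mpr hzp
  · have hLprod : L.prod = ((X : A[X]) ^ (nA * nB), (X : B[X]) ^ (nA * nB)) := by
      rw [hL, Multiset.prod_add]
      have h1 : (((nB • lA).map (fun p => (p, (1 : B[X])))).prod)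
          = ((lA.prod ^ nB : A[X]), (1 : B[X])) := by
        rw [show (fun p : A[X] => (p, (1 : B[X]))) = ⇑(MonoidHom.inl A[X] B[X]) from rfl]
        rw [Multiset.prod_hom (nB • lA) (MonoidHom.inl A[X] B[X]), Multiset.prod_nsmul]
        rfl
      have h2 : (((nA • lB).map (fun q => ((1 : A[X]), q))).prod)
          = ((1 : A[X]), (lB.prod ^ nA : B[X])) := by
        rw [show (fun q : B[X] => ((1 : A[X]), q)) = ⇑(MonoidHom.inr A[X] B[X]) from rfl]
        rw [Multiset.prod_hom (nA • lB) (MonoidHom.inr A[X] B[X]), Multiset.prod_nsmul]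
        rfl
      rw [h1, h2, hlA, hlB]
      rw [Prod.mk_mul_mk, mul_one, one_mul, ← pow_mul, ← pow_mul, mul_comm nB nA]
    rw [Multiset.prod_hom L E.symm, hLprod]
    apply E.injective
    rw [RingEquiv.apply_symm_apply, map_pow]
    have hEX : E (X : Polynomial (A × B)) = (X, X) := by
      show ((Polynomial.mapRingHom (RingHom.fst A B)).prod
        (Polynomial.mapRingHom (RingHom.snd A B))) X = (X, X)
      simp
    rw [hEX]
    rfl


def piFinSuccRE {m : ℕ} (D : Fin (m + 1) → Type u) [∀ i, CommRing (D i)] :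
    (∀ i, D i) ≃+* D 0 × (∀ i : Fin m, D i.succ) where
  toFun f := (f 0, fun i => f i.succ)
  invFun p := Fin.cases p.1 p.2
  left_inv f := by
    funext i
    induction i using Fin.cases with
    | zero => simp
    | succ j => simp
  right_inv p := by
    refine Prod.ext ?_ ?_
    · simp
    · funext i; simp
  map_mul' _ _ := rfl
  map_add' _ _ := rfl

theorem exists_primes_transfer {S T : Type u} [CommRing S] [CommRing T] (E : S ≃+* T)
    (h : ∃ n, 1 ≤ n ∧ ∃ l : Multiset T[X], (∀ p ∈ l, Prime p) ∧ l.prod = X ^ n) :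
    ∃ n, 1 ≤ n ∧ ∃ l : Multiset S[X], (∀ p ∈ l, Prime p) ∧ l.prod = X ^ n := by
  obtain ⟨n, hn, l, hp, hl⟩ := h
  set φ := Polynomial.mapEquiv E.symm with hφ
  refine ⟨n, hn, l.map (⇑φ), ?_, ?_⟩
  · intro x hx
    obtain ⟨z, hz, rfl⟩ := Multiset.mem_map.mp hx
    exact (MulEquiv.prime_iff φ.toMulEquiv).mpr (hp z hz)
  · rw [Multiset.prod_hom l φ, hl, map_pow]
    have : φ (X : T[X]) = X := by simp [hφ, Polynomial.mapEquiv]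
    rw [this]

theorem exists_primes_of_fpd : ∀ (m : ℕ) (D : Fin m → Type u) [inst : ∀ i, CommRing (D i)],
    (∀ i, IsDomain (D i)) →
    ∃ n, 1 ≤ n ∧ ∃ l : Multiset (Polynomial (∀ i, D i)),
      (∀ p ∈ l, Prime p) ∧ l.prod = X ^ n := by
  intro m
  induction m with
  | zero =>
    intro D inst hdom
    haveI : Subsingleton (∀ i, D i) := ⟨fun a b => funext fun i => i.elim0⟩
    exact ⟨1, le_refl 1, 0, fun p hp => absurd hp (Multiset.notMem_zero p),
      Subsingleton.elim _ _⟩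
  | succ m IH =>
    intro D inst hdom
    haveI : IsDomain (D 0) := hdom 0
    have htail := @IH (fun i => D i.succ) (fun i => inst i.succ) (fun i => hdom i.succ)
    have hhead : ∃ n, 1 ≤ n ∧ ∃ l : Multiset (Polynomial (D 0)),
        (∀ p ∈ l, Prime p) ∧ l.prod = X ^ n :=
      ⟨1, le_refl 1, {(X : Polynomial (D 0))}, by
        intro p hp
        rw [Multiset.mem_singleton] at hp
        rw [hp]
        exact Polynomial.prime_X, by simp⟩
    exact exists_primes_transfer (piFinSuccRE D) (primes_prod_ring hhead htail)

end XnAux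

theorem Xn_prod_primes_iff_finprod_domains {R : Type u} [CommRing R] :
    (∃ (n : ℕ), 1 ≤ n ∧ ∃ l : Multiset (Polynomial R),
        (∀ p ∈ l, Prime p) ∧ l.prod = (Polynomial.X : Polynomial R) ^ n) ↔
    (∃ (m : ℕ) (D : Fin m → Type u) (inst : ∀ i, CommRing (D i)),
      letI : ∀ i, CommRing (D i) := inst
      (∀ i, IsDomain (D i)) ∧ Nonempty (R ≃+* ∀ i, D i)) := by
  constructor
  · rintro ⟨n, hn, l, hp, hl⟩
    exact XnAux.fpd_main l.card R n l le_rfl hn hp hl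
  · rintro ⟨m, D, inst, hdom, ⟨E⟩⟩
    letI : ∀ i, CommRing (D i) := inst
    exact XnAux.exists_primes_transfer E (XnAux.exists_primes_of_fpd m D hdom)
end

section
/- Let R be a commutative ring. Then X is a finite product of irreducible elements of R[X] if and only if R is a finite direct product of indecomposable rings. -/
open Polynomial

/-- An element `a` of a commutative ring `S` is irreducible if it is a nonunit and
whenever `a = b * c`, then `(a) = (b)` or `(a) = (c)`. -/
def IrredAssoc {S : Type*} [CommRing S] (a : S) : Prop :=
  ¬IsUnit a ∧ ∀ b c : S, a = b * c →
    Ideal.span {a} = Ideal.span {b} ∨ Ideal.span {a} = Ideal.span {c}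

lemma spanSingEq {S : Type*} [CommRing S] {a b : S} :
    Ideal.span {a} = Ideal.span {b} ↔ a ∣ b ∧ b ∣ a := by
  rw [le_antisymm_iff, Ideal.span_singleton_le_span_singleton,
    Ideal.span_singleton_le_span_singleton, and_comm]

lemma X_irredAssoc_step {S : Type*} [CommRing S]
    (hS : ∀ e : S, e * e = e → e = 0 ∨ e = 1) (b c : S[X]) (h : (X : S[X]) = b * c) :
    Ideal.span {(X : S[X])} = Ideal.span {b} ∨ Ideal.span {(X : S[X])} = Ideal.span {c} := by
  have h0 : b.coeff 0 * c.coeff 0 = 0 := by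
    have := congrArg (fun p => Polynomial.coeff p 0) h
    simpa using this.symm
  have h1 : b.coeff 0 * c.coeff 1 + b.coeff 1 * c.coeff 0 = 1 := by
    have := congrArg (fun p => Polynomial.coeff p 1) h
    simpa [Polynomial.mul_coeff_one] using this.symm
  have hid : (b.coeff 0 * c.coeff 1) * (b.coeff 0 * c.coeff 1) = b.coeff 0 * c.coeff 1 := by
    have e1 : b.coeff 0 * c.coeff 1 = 1 - b.coeff 1 * c.coeff 0 := by linear_combination h1
    calc (b.coeff 0 * c.coeff 1) * (b.coeff 0 * c.coeff 1)
        = (b.coeff 0 * c.coeff 1) * (1 - b.coeff 1 * c.coeff 0) := by rw [← e1]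
      _ = b.coeff 0 * c.coeff 1 - c.coeff 1 * b.coeff 1 * (b.coeff 0 * c.coeff 0) := by ring
      _ = b.coeff 0 * c.coeff 1 := by rw [h0]; ring
  rcases hS _ hid with h00 | h11
  · left
    have hβ : b.coeff 0 = 0 := by
      calc b.coeff 0 = b.coeff 0 * (b.coeff 0 * c.coeff 1 + b.coeff 1 * c.coeff 0) := by
            rw [h1, mul_one]
        _ = b.coeff 0 * (b.coeff 0 * c.coeff 1) + b.coeff 1 * (b.coeff 0 * c.coeff 0) := by ring
        _ = 0 := by rw [h00, h0]; ring
    exact spanSingEq.mpr ⟨Polynomial.X_dvd_iff.mpr hβ, ⟨c, h⟩⟩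
  · right
    have hγ : c.coeff 0 = 0 := by
      calc c.coeff 0 = c.coeff 0 * (b.coeff 0 * c.coeff 1) := by rw [h11, mul_one]
        _ = (b.coeff 0 * c.coeff 0) * c.coeff 1 := by ring
        _ = 0 := by rw [h0]; ring
    exact spanSingEq.mpr ⟨Polynomial.X_dvd_iff.mpr hγ, ⟨b, by rw [h]; ring⟩⟩

noncomputable def piPoly {ι : Type*} (A : ι → Type*) [∀ i, CommRing (A i)] :
    Polynomial (∀ i, A i) →+* ∀ i, Polynomial (A i) :=
  Pi.ringHom fun i => Polynomial.mapRingHom (Pi.evalRingHom A i)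

lemma piPoly_coeff {ι : Type*} (A : ι → Type*) [∀ i, CommRing (A i)]
    (p : Polynomial (∀ i, A i)) (i : ι) (k : ℕ) :
    ((piPoly A p) i).coeff k = p.coeff k i := by
  simp [piPoly, Pi.ringHom, RingHom.pi_apply, Polynomial.coeff_map]

lemma piPoly_inj {ι : Type*} (A : ι → Type*) [∀ i, CommRing (A i)] :
    Function.Injective (piPoly A) := by
  intro p q h
  ext k i
  have := congrArg (fun q => (q i).coeff k) h
  simpa only [piPoly_coeff] using this

lemma piPoly_surj {ι : Type*} [Fintype ι] (A : ι → Type*) [∀ i, CommRing (A i)] :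
    Function.Surjective (piPoly A) := by
  intro p
  classical
  set N := Finset.univ.sup fun i => (p i).natDegree with hN
  refine ⟨∑ k ∈ Finset.range (N + 1), C (fun i => (p i).coeff k) * X ^ k, funext fun i => ?_⟩
  have hd : (p i).natDegree < N + 1 := Nat.lt_succ_of_le (hN ▸ Finset.le_sup (f := fun i => (p i).natDegree) (Finset.mem_univ i))
  conv_rhs => rw [(p i).as_sum_range' (N + 1) hd]
  simp [piPoly, Pi.ringHom, RingHom.pi_apply, Polynomial.map_sum, Polynomial.C_mul_X_pow_eq_monomial]

lemma piPoly_dvd_iff {ι : Type*} [Fintype ι] (A : ι → Type*) [∀ i, CommRing (A i)]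
    {p q : Polynomial (∀ i, A i)} :
    p ∣ q ↔ ∀ i, piPoly A p i ∣ piPoly A q i := by
  rw [← pi_dvd_iff]
  constructor
  · exact fun h => map_dvd _ h
  · rintro ⟨d, hd⟩
    obtain ⟨D, rfl⟩ := piPoly_surj A d
    exact ⟨D, piPoly_inj A (by rw [map_mul, hd])⟩

lemma equiv_dvd_iff {S S' : Type*} [CommRing S] [CommRing S'] (e : S ≃+* S') {x y : S} :
    x ∣ y ↔ e x ∣ e y := by
  constructor
  · exact fun h => map_dvd e.toRingHom h
  · intro h
    have := map_dvd e.symm.toRingHom h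
    simpa using this

lemma irredAssoc_map {S S' : Type*} [CommRing S] [CommRing S'] (e : S ≃+* S') {a : S}
    (ha : IrredAssoc a) : IrredAssoc (e a) := by
  refine ⟨fun h => ha.1 ?_, fun b c h => ?_⟩
  · have := h.map e.symm.toRingHom
    simpa using this
  · have h' : a = e.symm b * e.symm c := by
      apply e.injective
      simpa using h
    rcases ha.2 _ _ h' with hh | hh
    · left
      rw [spanSingEq] at hh ⊢
      refine ⟨?_, ?_⟩
      · have := map_dvd e.toRingHom hh.1
        simpa using this
      · have := map_dvd e.toRingHom hh.2
        simpa using this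
    · right
      rw [spanSingEq] at hh ⊢
      refine ⟨?_, ?_⟩
      · have := map_dvd e.toRingHom hh.1
        simpa using this
      · have := map_dvd e.toRingHom hh.2
        simpa using this

lemma X_mul_cancel {S : Type*} [CommRing S] {p q : Polynomial S}
    (h : (X : Polynomial S) * p = X * q) : p = q :=
  Polynomial.ext fun k => by
    have := congrArg (fun r => Polynomial.coeff r (k + 1)) h
    simpa [Polynomial.coeff_X_mul] using this

lemma prod_lin_idem {T : Type*} [CommRing T] {ι : Type*} [DecidableEq ι] (t : ι → T)
    (horth : ∀ i j, i ≠ j → t i * t j = 0) (s : Finset ι) :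
    ∏ i ∈ s, (C (t i) * X + C (1 - t i)) =
      C (∑ i ∈ s, t i) * X + C (1 - ∑ i ∈ s, t i) := by
  induction s using Finset.induction_on with
  | empty => simp
  | @insert i s hi ih =>
    rw [Finset.prod_insert hi, ih, Finset.sum_insert hi]
    have hts : (C (t i) : Polynomial T) * C (∑ j ∈ s, t j) = 0 := by
      rw [← C_mul, Finset.mul_sum, Finset.sum_eq_zero fun j hj => horth i j (fun hij => hi (hij ▸ hj)), C_0]
    simp only [C_add, C_sub, C_1]
    linear_combination (X ^ 2 - 2 * X + 1) * hts

lemma mpr_aux {R : Type u} [CommRing R] (m : ℕ) (D : Fin m → Type u) [inst : ∀ i, CommRing (D i)]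
    (hD : ∀ i, ∀ e : D i, e * e = e → e = 0 ∨ e = 1) (φ : R ≃+* ∀ i, D i) :
    ∃ l : Multiset (Polynomial R), (∀ f ∈ l, IrredAssoc f) ∧
      l.prod = (X : Polynomial R) := by
  classical
  let t : Fin m → (∀ i, D i) := fun i => Pi.single i 1
  have horth : ∀ i j, i ≠ j → t i * t j = 0 := by
    intro i j hij
    funext k
    simp only [t, Pi.mul_apply, Pi.zero_apply]
    rcases eq_or_ne k i with rfl | hk
    · rw [Pi.single_eq_of_ne hij, mul_zero]
    · rw [Pi.single_eq_of_ne hk, zero_mul]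
  let g : Fin m → Polynomial (∀ i, D i) := fun i => C (t i) * X + C (1 - t i)
  let Sg : Finset (Fin m) := Finset.univ.filter fun i => (0 : D i) ≠ 1
  have ht_triv : ∀ i ∉ Sg, t i = 0 := by
    intro i hi
    have h01 : (0 : D i) = 1 := by simpa [Sg] using hi
    funext k
    simp only [t, Pi.zero_apply]
    rcases eq_or_ne k i with rfl | hk
    · rw [Pi.single_eq_same]; exact h01.symm
    · rw [Pi.single_eq_of_ne hk]
  have hsum : ∑ i ∈ Sg, t i = 1 := by
    rw [Finset.sum_subset (Finset.subset_univ Sg) (fun i _ hi => ht_triv i hi)]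
    funext k
    rw [Finset.sum_apply]
    simp only [t]
    rw [Finset.sum_eq_single k (fun b _ hb => Pi.single_eq_of_ne (Ne.symm hb) 1)
      (fun h => absurd (Finset.mem_univ k) h)]
    simp
  have hg_comp : ∀ i j, piPoly D (g i) j = C (t i j) * X + C (1 - t i j) := by
    intro i j
    simp [piPoly, Pi.ringHom, RingHom.pi_apply, g, Polynomial.map_add, Polynomial.map_mul]
  have hg_self : ∀ i, piPoly D (g i) i = X := by
    intro i
    rw [hg_comp]
    simp [t]
  have hg_ne : ∀ i j, j ≠ i → piPoly D (g i) j = 1 := by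
    intro i j hj
    rw [hg_comp]
    simp [t, Pi.single_eq_of_ne hj]
  have hirr : ∀ i ∈ Sg, IrredAssoc (g i) := by
    intro i hi
    have h01 : (0 : D i) ≠ 1 := by simpa [Sg] using hi
    constructor
    · intro hu
      have hu' : IsUnit (piPoly D (g i) i) := hu.map ((Pi.evalRingHom _ i).comp (piPoly D))
      rw [hg_self] at hu'
      rcases hu'.exists_right_inv with ⟨y, hy⟩
      have := congrArg (fun p => Polynomial.coeff p 0) hy
      simp at this
      exact h01 this
    · intro b c h
      have hcomp : ∀ j, piPoly D (g i) j = piPoly D b j * piPoly D c j := by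
        intro j
        rw [h, map_mul]
        rfl
      have hXi : (X : Polynomial (D i)) = piPoly D b i * piPoly D c i := by
        rw [← hg_self i, hcomp]
      rcases X_irredAssoc_step (hD i) _ _ hXi with hsp | hsp
      · left
        rw [spanSingEq] at hsp ⊢
        refine ⟨?_, ⟨c, h⟩⟩
        rw [piPoly_dvd_iff D]
        intro j
        by_cases hj : j = i
        · subst hj
          rw [hg_self]
          exact hsp.1
        · rw [hg_ne i j hj]
          exact one_dvd _
      · right
        rw [spanSingEq] at hsp ⊢
        refine ⟨?_, ⟨b, by rw [h, mul_comm]⟩⟩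
        rw [piPoly_dvd_iff D]
        intro j
        by_cases hj : j = i
        · subst hj
          rw [hg_self]
          exact hsp.1
        · rw [hg_ne i j hj]
          exact one_dvd _
  let ψ : Polynomial R ≃+* Polynomial (∀ i, D i) := Polynomial.mapEquiv φ
  refine ⟨Sg.val.map fun i => ψ.symm (g i), ?_, ?_⟩
  · intro f hf
    rcases Multiset.mem_map.mp hf with ⟨i, hi, rfl⟩
    exact irredAssoc_map ψ.symm (hirr i hi)
  · have : (Sg.val.map fun i => ψ.symm (g i)).prod = ∏ i ∈ Sg, ψ.symm (g i) := rfl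
    rw [this, ← map_prod, prod_lin_idem t horth, hsum]
    simp only [C_1, C_0, one_mul, sub_self, add_zero]
    have hx : ψ (X : Polynomial R) = X := by simp [ψ]
    rw [← hx, RingEquiv.symm_apply_apply]

lemma mp_aux {R : Type u} [CommRing R] {n : ℕ} (f : Fin n → Polynomial R)
    (hirr : ∀ i, IrredAssoc (f i)) (hX : ∏ i, f i = (X : Polynomial R)) :
    (∀ i, ∀ e : R ⧸ Ideal.span {(f i).coeff 0}, e * e = e → e = 0 ∨ e = 1) ∧
      Nonempty (R ≃+* ∀ i, R ⧸ Ideal.span {(f i).coeff 0}) := by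
  classical
  set a : Fin n → R := fun i => (f i).coeff 0 with ha
  have hprod0 : ∏ i, a i = 0 := by
    have h := congrArg Polynomial.constantCoeff hX
    rw [map_prod] at h
    simpa using h
  have hcop : ∀ (i j : Fin n), i ≠ j → IsCoprime (a i) (a j) := by
    intro i j hij
    have hj' : j ∈ Finset.univ.erase i := Finset.mem_erase.mpr ⟨hij.symm, Finset.mem_univ j⟩
    set P := ∏ k ∈ (Finset.univ.erase i).erase j, f k with hP
    have hfact : (X : Polynomial R) = f i * (f j * P) := by
      rw [← hX, ← Finset.mul_prod_erase _ f (Finset.mem_univ i),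
        ← Finset.mul_prod_erase _ f hj']
    have h1 := congrArg (fun p => Polynomial.coeff p 1) hfact
    rw [Polynomial.coeff_X_one, Polynomial.mul_coeff_one, Polynomial.mul_coeff_zero] at h1
    exact ⟨(f j * P).coeff 1, (f i).coeff 1 * P.coeff 0, by linear_combination h1.symm⟩
  set I : Fin n → Ideal R := fun i => Ideal.span {a i} with hI
  have hIcop : Pairwise (Function.onFun IsCoprime I) := fun i j hij =>
    (Ideal.isCoprime_span_singleton_iff _ _).mpr (hcop i j hij)
  have hInf : ⨅ i, I i = ⊥ := by
    rw [hI]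
    rw [Ideal.iInf_span_singleton hcop, hprod0]
    exact Ideal.span_singleton_eq_bot.mpr rfl
  let φ : R ≃+* ∀ i, R ⧸ I i :=
    (RingEquiv.quotientBot R).symm.trans ((Ideal.quotEquivOfEq hInf.symm).trans
      (Ideal.quotientInfRingEquivPiQuotient I hIcop))
  set π : (j : Fin n) → (Polynomial R →+* Polynomial (R ⧸ I j)) :=
    fun j => Polynomial.mapRingHom (Ideal.Quotient.mk (I j)) with hπ
  have hinj : ∀ p q : Polynomial R, (∀ j, π j p = π j q) → p = q := by
    intro p q h
    ext k
    have hk : ∀ j, Ideal.Quotient.mk (I j) (p.coeff k) = Ideal.Quotient.mk (I j) (q.coeff k) := by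
      intro j
      have := congrArg (fun r => Polynomial.coeff r k) (h j)
      simpa [hπ, Polynomial.coeff_map] using this
    have hmem : p.coeff k - q.coeff k ∈ (⊥ : Ideal R) := by
      rw [← hInf]
      exact (Submodule.mem_iInf _).mpr fun j => Ideal.Quotient.eq.mp (hk j)
    rw [Ideal.mem_bot, sub_eq_zero] at hmem
    exact hmem
  have hsurj : ∀ p : (∀ j, Polynomial (R ⧸ I j)), ∃ P : Polynomial R, ∀ j, π j P = p j := by
    intro p
    have hs : ∀ c : (∀ j, R ⧸ I j), ∃ r : R, ∀ j, Ideal.Quotient.mk (I j) r = c j := by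
      intro c
      obtain ⟨r, hr⟩ := Ideal.pi_quotient_surjective hIcop c
      exact ⟨r, fun j => hr j⟩
    set N := Finset.univ.sup (fun j => (p j).natDegree) with hN
    refine ⟨∑ k ∈ Finset.range (N + 1), Polynomial.C ((hs fun j => (p j).coeff k).choose) * X ^ k,
      fun j => ?_⟩
    have hd : (p j).natDegree < N + 1 :=
      Nat.lt_succ_of_le (hN ▸ Finset.le_sup (f := fun j => (p j).natDegree) (Finset.mem_univ j))
    conv_rhs => rw [(p j).as_sum_range' (N + 1) hd]
    rw [hπ]
    simp only [Polynomial.coe_mapRingHom, Polynomial.map_sum, Polynomial.map_mul,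
      Polynomial.map_C, Polynomial.map_pow, Polynomial.map_X]
    refine Finset.sum_congr rfl fun k _ => ?_
    rw [(hs fun j => (p j).coeff k).choose_spec j, Polynomial.C_mul_X_pow_eq_monomial]
  refine ⟨?_, ⟨φ⟩⟩
  intro i ε hε
  -- the component X-factor structure
  have hF0 : (π i (f i)).coeff 0 = 0 := by
    simp only [hπ, Polynomial.coe_mapRingHom, Polynomial.coeff_map]
    rw [Ideal.Quotient.eq_zero_iff_mem]
    exact Ideal.subset_span rfl
  obtain ⟨G, hG⟩ := Polynomial.X_dvd_iff.mpr hF0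
  set H := ∏ k ∈ Finset.univ.erase i, π i (f k) with hH
  have hXfact : (X : Polynomial (R ⧸ I i)) = π i (f i) * H := by
    have : (X : Polynomial (R ⧸ I i)) = π i X := by simp [hπ]
    rw [this, ← hX, map_prod, ← Finset.mul_prod_erase _ _ (Finset.mem_univ i), hH]
  have hGH : G * H = 1 := by
    apply X_mul_cancel (p := G * H) (q := 1)
    rw [mul_one, ← mul_assoc, ← hG, ← hXfact]
  set A : Polynomial (R ⧸ I i) := Polynomial.C ε with hA'
  have hA : A * A = A := by
    rw [hA', ← Polynomial.C_mul, hε]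
  have hfac : (A * X + (1 - A)) * ((1 - A) * X + A) = X := by
    linear_combination (2 * X - X ^ 2 - 1) * hA
  obtain ⟨B, hB⟩ := hsurj (Function.update (fun j => π j (f i)) i (G * (A * X + (1 - A))))
  obtain ⟨Cc, hCc⟩ := hsurj (Function.update (fun _ => 1) i ((1 - A) * X + A))
  have hfi : f i = B * Cc := by
    apply hinj
    intro j
    rw [map_mul, hB, hCc]
    by_cases hj : j = i
    · subst hj
      rw [Function.update_self, Function.update_self, hG]
      linear_combination (-G) * hfac
    · rw [Function.update_of_ne hj, Function.update_of_ne hj, mul_one]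
  have hg0 : G.coeff 0 * H.coeff 0 = 1 := by
    have := congrArg (fun p => Polynomial.coeff p 0) hGH
    simpa using this
  rcases (hirr i).2 B Cc hfi with hsp | hsp
  · right
    have hdvd : π i (f i) ∣ π i B := _root_.map_dvd _ (spanSingEq.mp hsp).1
    rw [hG, hB, Function.update_self] at hdvd
    have hX1 : (X : Polynomial (R ⧸ I i)) ∣ G * (A * X + (1 - A)) :=
      dvd_trans (dvd_mul_right X G) hdvd
    have h0 : G.coeff 0 * (1 - ε) = 0 := by
      have h' := Polynomial.X_dvd_iff.mp hX1
      rw [Polynomial.mul_coeff_zero] at h'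
      simpa [hA'] using h'
    have h1 : (1 : R ⧸ I i) - ε = 0 := by
      calc (1 : R ⧸ I i) - ε = (G.coeff 0 * H.coeff 0) * (1 - ε) := by rw [hg0, one_mul]
        _ = H.coeff 0 * (G.coeff 0 * (1 - ε)) := by ring
        _ = 0 := by rw [h0, mul_zero]
    have := sub_eq_zero.mp h1
    exact this.symm
  · left
    have hdvd : π i (f i) ∣ π i Cc := _root_.map_dvd _ (spanSingEq.mp hsp).1
    rw [hG, hCc, Function.update_self] at hdvd
    have hX1 : (X : Polynomial (R ⧸ I i)) ∣ (1 - A) * X + A :=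
      dvd_trans (dvd_mul_right X G) hdvd
    have h' := Polynomial.X_dvd_iff.mp hX1
    simpa [hA'] using h'


theorem X_prod_irreducibles_iff_finprod_indecomposable {R : Type u} [CommRing R] :
    (∃ l : Multiset (Polynomial R),
        (∀ f ∈ l, IrredAssoc f) ∧ l.prod = (Polynomial.X : Polynomial R)) ↔
    (∃ (m : ℕ) (D : Fin m → Type u) (inst : ∀ i, CommRing (D i)),
      letI : ∀ i, CommRing (D i) := inst
      (∀ i, ∀ e : D i, e * e = e → e = 0 ∨ e = 1) ∧ Nonempty (R ≃+* ∀ i, D i)) := by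
  constructor
  · rintro ⟨l, hl, hX⟩
    obtain ⟨L, rfl⟩ := Quotient.exists_rep l
    have hprod : ∏ i, L.get i = (X : Polynomial R) := by
      rw [← List.prod_ofFn, List.ofFn_get]
      simpa using hX
    have hirr : ∀ i, IrredAssoc (L.get i) := fun i => hl _ (by simp)
    obtain ⟨h1, h2⟩ := mp_aux (fun i => L.get i) hirr hprod
    exact ⟨L.length, fun i => R ⧸ Ideal.span {(L.get i).coeff 0}, inferInstance, h1, h2⟩
  · rintro ⟨m, D, inst, hD, ⟨φ⟩⟩
    exact mpr_aux m D (inst := inst) hD φ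
end

section
/- Let R be a commutative ring with a nonzero element a satisfying a² = 0, and suppose R is indecomposable. Then X² = X·X = (X+a)(X−a) give two factorizations of X² in R[X] into irreducible elements that are not isomorphic (X is not an associate of X+a or X−a). -/
open Polynomial

private lemma coeff_mul_one' {R : Type*} [CommRing R] (f g : R[X]) :
    (f * g).coeff 1 = f.coeff 0 * g.coeff 1 + f.coeff 1 * g.coeff 0 := by
  rw [coeff_mul, Finset.Nat.sum_antidiagonal_eq_sum_range_succ_mk]
  simp [Finset.sum_range_succ]

/-- If the constant coefficient of `f` is a unit and `X + C b = f * g` with `b * b = 0`,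
then `(X + C b) = (g)`. -/
private lemma span_eq_of_unit {R : Type*} [CommRing R] {b : R} (hb : b * b = 0)
    {f g : R[X]} (h : X + C b = f * g) (hu : IsUnit (f.coeff 0)) :
    Ideal.span ({X + C b} : Set R[X]) = Ideal.span {g} := by
  obtain ⟨u, hfu⟩ := hu.exists_right_inv
  -- f.eval (-b) = f.coeff 0 - b * c for some c
  obtain ⟨c, hc⟩ : (-b : R) - 0 ∣ f.eval (-b) - f.eval 0 := Polynomial.sub_dvd_eval_sub _ _ f
  rw [sub_zero] at hc
  have hf0 : f.eval 0 = f.coeff 0 := (Polynomial.coeff_zero_eq_eval_zero f).symm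
  -- f.eval (-b) is a unit
  have hunit : IsUnit (f.eval (-b)) := by
    apply IsUnit.of_mul_eq_one (u * (1 + b * c * u))
    have hc' : f.eval (-b) = f.coeff 0 + (-b) * c := by
      rw [hf0] at hc; linear_combination hc
    rw [hc']
    linear_combination (1 + b * c * u) * hfu - (c * c * u * u) * hb
  -- hence g.eval (-b) = 0
  have hev : f.eval (-b) * g.eval (-b) = 0 := by
    have := congrArg (fun p => Polynomial.eval (-b) p) h
    simpa using this.symm
  have hg : g.IsRoot (-b) := (IsUnit.mul_right_eq_zero hunit).mp hev
  have hdvd : (X + C b) ∣ g := by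
    have := (Polynomial.dvd_iff_isRoot).mpr hg
    rwa [map_neg, sub_neg_eq_add] at this
  refine le_antisymm ?_ ?_
  · exact Ideal.span_singleton_le_span_singleton.mpr ⟨f, by rw [h, mul_comm]⟩
  · exact Ideal.span_singleton_le_span_singleton.mpr hdvd

private lemma key {R : Type*} [CommRing R] [Nontrivial R] (b : R) (hb : b * b = 0)
    (hind : ∀ e : R, e * e = e → e = 0 ∨ e = 1) :
    IrredAssoc ((X : R[X]) + C b) := by
  constructor
  · intro hu
    have h1 : IsUnit ((X + C b).eval 0) := hu.map (Polynomial.evalRingHom 0)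
    simp only [eval_add, eval_X, eval_C, zero_add] at h1
    obtain ⟨v, hv⟩ := h1.exists_right_inv
    have : (1 : R) = 0 := by
      calc (1:R) = (b * v) * (b * v) := by rw [hv, one_mul]
      _ = (b * b) * (v * v) := by ring
      _ = 0 := by rw [hb, zero_mul]
    exact one_ne_zero this
  · intro f g h
    have h0 : f.coeff 0 * g.coeff 0 = b := by
      have := congrArg (fun p => Polynomial.coeff p 0) h
      simpa [Polynomial.mul_coeff_zero] using this.symm
    have h1 : f.coeff 0 * g.coeff 1 + f.coeff 1 * g.coeff 0 = 1 := by
      have := congrArg (fun p => Polynomial.coeff p 1) h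
      simp only [coeff_mul_one', coeff_add, coeff_X_one, coeff_C, one_ne_zero, if_false,
        add_zero] at this
      exact this.symm
    set x := f.coeff 0 * g.coeff 1 with hx
    have hr2 : (x - x * x) * (x - x * x) = 0 := by
      have hn : x - x * x = b * (f.coeff 1 * g.coeff 1) := by
        rw [hx]; linear_combination (-(f.coeff 0 * g.coeff 1)) * h1
          + (f.coeff 1 * g.coeff 1) * h0
      rw [hn]
      linear_combination (f.coeff 1 * g.coeff 1 * (f.coeff 1 * g.coeff 1)) * hb
    have he : (x + (x - x*x) * (2*x - 1)) * (x + (x - x*x) * (2*x - 1))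
        = x + (x - x*x) * (2*x - 1) := by
      linear_combination ((2*x - 1)^2 - 4) * hr2
    rcases hind _ he with he0 | he1
    · -- e = 0 : g.coeff 0 is a unit, span = span {f}
      left
      have hxx : x * x = 0 := by
        linear_combination (2*x - (x + (x - x*x)*(2*x-1))) * he0 + ((2*x-1)*(2*x-1)) * hr2
      have hgu : IsUnit (g.coeff 0) := by
        apply IsUnit.of_mul_eq_one (f.coeff 1 * (1 + x))
        linear_combination (1 + x) * h1 - hxx
      have h' : X + C b = g * f := by rw [h, mul_comm]
      exact span_eq_of_unit hb h' hgu
    · -- e = 1 : f.coeff 0 is a unit, span = span {g}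
      right
      have hfu : IsUnit (f.coeff 0) := by
        apply IsUnit.of_mul_eq_one (g.coeff 1 * (1 + (x - x*x)*(2*x - 1)))
        have : x * (1 + (x - x*x)*(2*x - 1)) = 1 := by
          linear_combination (1 + (x - x*x)*(2*x-1)) * he1 - ((2*x-1)*(2*x-1)) * hr2
        calc f.coeff 0 * (g.coeff 1 * (1 + (x - x*x)*(2*x - 1)))
            = x * (1 + (x - x*x)*(2*x - 1)) := by rw [hx]; ring
          _ = 1 := this
      exact span_eq_of_unit hb h hfu

theorem two_nonisomorphic_factorizations_of_X_sq {R : Type*} [CommRing R]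
    (a : R) (ha0 : a ≠ 0) (ha2 : a ^ 2 = 0)
    (hind : ∀ e : R, e * e = e → e = 0 ∨ e = 1) :
    (Polynomial.X : Polynomial R) ^ 2 = Polynomial.X * Polynomial.X ∧
    (Polynomial.X : Polynomial R) ^ 2 =
      (Polynomial.X + Polynomial.C a) * (Polynomial.X - Polynomial.C a) ∧
    IrredAssoc (Polynomial.X : Polynomial R) ∧
    IrredAssoc ((Polynomial.X : Polynomial R) + Polynomial.C a) ∧
    IrredAssoc ((Polynomial.X : Polynomial R) - Polynomial.C a) ∧
    Ideal.span {(Polynomial.X : Polynomial R)} ≠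
      Ideal.span {(Polynomial.X : Polynomial R) + Polynomial.C a} ∧
    Ideal.span {(Polynomial.X : Polynomial R)} ≠
      Ideal.span {(Polynomial.X : Polynomial R) - Polynomial.C a} := by
  haveI : Nontrivial R := nontrivial_of_ne a 0 ha0
  have haa : a * a = 0 := by rw [← pow_two]; exact ha2
  have hCa : (C a : R[X]) ^ 2 = 0 := by rw [← map_pow, ha2, map_zero]
  refine ⟨(sq X), by linear_combination hCa, ?_, ?_, ?_, ?_, ?_⟩
  · have := key (0 : R) (by rw [mul_zero]) hind
    rwa [map_zero, add_zero] at this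
  · exact key a haa hind
  · have := key (-a) (by rw [neg_mul_neg]; exact haa) hind
    rwa [map_neg, ← sub_eq_add_neg] at this
  · intro heq
    have hdvd : (X : R[X]) ∣ X + C a :=
      Ideal.span_singleton_le_span_singleton.mp heq.ge
    have : (X : R[X]) ∣ C a := (dvd_add_right dvd_rfl).mp hdvd
    rw [Polynomial.X_dvd_iff, coeff_C_zero] at this
    exact ha0 this
  · intro heq
    have hdvd : (X : R[X]) ∣ X - C a :=
      Ideal.span_singleton_le_span_singleton.mp heq.ge
    have : (X : R[X]) ∣ C a := by
      have h2 : (X : R[X]) ∣ X - (X - C a) := dvd_sub dvd_rfl hdvd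
      simpa using h2
    rw [Polynomial.X_dvd_iff, coeff_C_zero] at this
    exact ha0 this
end

section
/- Let R be a commutative ring such that X² ∈ R[X] has unique factorization into irreducibles up to order and unit multiplication. Then R is reduced. -/
open Polynomial Multiset

lemma span_singleton_eq_iff {S : Type*} [CommRing S] {x y : S} :
    Ideal.span {x} = Ideal.span {y} ↔ x ∣ y ∧ y ∣ x := by
  rw [le_antisymm_iff, Ideal.span_singleton_le_span_singleton,
    Ideal.span_singleton_le_span_singleton, and_comm]

lemma span_mul_unit {S : Type*} [CommRing S] {g u : S} (hu : IsUnit u) :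
    Ideal.span {g * u} = Ideal.span {g} := by
  obtain ⟨U, rfl⟩ := hu
  refine span_singleton_eq_iff.mpr ⟨⟨(U⁻¹ : Sˣ), by simp [mul_assoc]⟩, ⟨U, rfl⟩⟩

lemma unit_mul_irred {S : Type*} [CommRing S] {g u : S} (hg : IrredAssoc g) (hu : IsUnit u) :
    IrredAssoc (g * u) := by
  obtain ⟨U, rfl⟩ := hu
  constructor
  · intro h
    exact hg.1 (isUnit_of_mul_isUnit_left h)
  · intro b c h
    have h2 : g = b * (c * (U⁻¹ : Sˣ)) := by
      have : g * (U : S) * (U⁻¹ : Sˣ) = b * c * (U⁻¹ : Sˣ) := by rw [h]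
      calc g = g * (U : S) * (U⁻¹ : Sˣ) := by simp [mul_assoc]
        _ = b * (c * (U⁻¹ : Sˣ)) := by rw [this]; ring
    rcases hg.2 b (c * (U⁻¹ : Sˣ)) h2 with hb | hc
    · left; rw [span_mul_unit (Units.isUnit U)]; exact hb
    · right
      rw [span_mul_unit (Units.isUnit U), hc, span_mul_unit]
      exact Units.isUnit _




lemma irred_equiv {S T : Type*} [CommRing S] [CommRing T] (φ : S ≃+* T) {x : S}
    (h : IrredAssoc x) : IrredAssoc (φ x) := by
  constructor
  · intro hu
    have := hu.map φ.symm.toRingHom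
    simp at this
    exact h.1 this
  · intro b c hbc
    have hx : x = φ.symm b * φ.symm c := by
      have := congrArg φ.symm hbc
      simpa using this
    rcases h.2 _ _ hx with hs | hs
    · left
      rcases span_singleton_eq_iff.mp hs with ⟨h1, h2⟩
      refine span_singleton_eq_iff.mpr ⟨?_, ?_⟩
      · have := map_dvd φ.toRingHom h1; simpa using this
      · have := map_dvd φ.toRingHom h2; simpa using this
    · right
      rcases span_singleton_eq_iff.mp hs with ⟨h1, h2⟩
      refine span_singleton_eq_iff.mpr ⟨?_, ?_⟩
      · have := map_dvd φ.toRingHom h1; simpa using this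
      · have := map_dvd φ.toRingHom h2; simpa using this

noncomputable def shiftAE {R : Type*} [CommRing R] (t : R) : R[X] ≃ₐ[R] R[X] :=
  AlgEquiv.ofAlgHom (aeval (X + C t)) (aeval (X - C t))
    (by apply Polynomial.algHom_ext; simp)
    (by apply Polynomial.algHom_ext; simp)

lemma irred_X_add_C {R : Type*} [CommRing R] (hX : IrredAssoc (X : R[X])) (t : R) :
    IrredAssoc (X + C t) := by
  have h := irred_equiv (shiftAE t).toRingEquiv hX
  have h2 : (shiftAE t).toRingEquiv (X : R[X]) = X + C t := by
    simp [shiftAE]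
  rwa [h2] at h

lemma coeff_zero_not_unit {S : Type*} [CommRing S] {p : S[X]} (h0 : p.coeff 0 = 0)
    (hu : IsUnit p) : (1 : S) = 0 := by
  obtain ⟨U, hU⟩ := hu
  have h1 : p * (U⁻¹ : S[X]ˣ) = 1 := by rw [← hU]; exact U.mul_inv
  have := congrArg (fun q : S[X] => q.coeff 0) h1
  simpa [Polynomial.mul_coeff_zero, h0] using this.symm

lemma isUnit_multiset_prod {M : Type*} [CommMonoid M] (s : Multiset M)
    (h : ∀ x ∈ s, IsUnit x) : IsUnit s.prod := by
  induction s using Multiset.induction_on with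
  | empty => simp
  | cons a s ih =>
    rw [Multiset.prod_cons]
    exact (h a (Multiset.mem_cons_self a s)).mul (ih fun x hx => h x (Multiset.mem_cons_of_mem hx))

lemma caseA {R : Type*} [CommRing R] (hX : IrredAssoc (X : R[X]))
    (huniq : ∀ l₁ l₂ : Multiset (Polynomial R),
      (∀ f ∈ l₁, IrredAssoc f) → (∀ f ∈ l₂, IrredAssoc f) →
      l₁.prod = (Polynomial.X : Polynomial R) ^ 2 →
      l₂.prod = (Polynomial.X : Polynomial R) ^ 2 →
      Multiset.Rel (fun f g => ∃ u : (Polynomial R)ˣ, f = g * (u : Polynomial R)) l₁ l₂)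
    {a : R} (ha : a ^ 2 = 0) : a = 0 := by
  have hCa : (C a : R[X]) * C a = 0 := by
    rw [← C_mul, ← pow_two, ha, C_0]
  have hrel := huniq ((X + C a) ::ₘ (X - C a) ::ₘ 0) (X ::ₘ X ::ₘ 0)
    (by
      intro f hf
      rcases Multiset.mem_cons.mp hf with rfl | hf
      · exact irred_X_add_C hX a
      · rcases Multiset.mem_cons.mp hf with rfl | hf
        · have := irred_X_add_C hX (-a)
          rwa [map_neg, ← sub_eq_add_neg] at this
        · simp at hf)
    (by
      intro f hf
      rcases Multiset.mem_cons.mp hf with rfl | hf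
      · exact hX
      · rcases Multiset.mem_cons.mp hf with rfl | hf
        · exact hX
        · simp at hf)
    (by simp only [Multiset.prod_cons, Multiset.prod_zero, mul_one]
        linear_combination -hCa)
    (by simp only [Multiset.prod_cons, Multiset.prod_zero, mul_one]; ring)
  rcases Multiset.rel_cons_left.mp hrel with ⟨b, bs', hr, _, hb⟩
  have hbX : b = X := by
    have : b ∈ (X ::ₘ X ::ₘ (0 : Multiset R[X])) := by
      rw [hb]; exact Multiset.mem_cons_self _ _
    rcases Multiset.mem_cons.mp this with rfl | h
    · rfl
    · rcases Multiset.mem_cons.mp h with rfl | h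
      · rfl
      · simp at h
  subst hbX
  obtain ⟨u, hu⟩ := hr
  have := congrArg (fun p : R[X] => p.coeff 0) hu
  simpa [Polynomial.mul_coeff_zero] using this




universe u

structure Split (R A B : Type u) [CommRing R] [CommRing A] [CommRing B] where
  π : R →+* A
  π' : R →+* B
  hπ : Function.Surjective π
  hπ' : Function.Surjective π'
  e : R
  he : π e = 1
  he' : π' e = 0
  hinj : ∀ r : R, π r = 0 → π' r = 0 → r = 0

namespace Split

variable {R A B : Type u} [CommRing R] [CommRing A] [CommRing B] (S : Split R A B)

lemma he2 : S.π (1 - S.e) = 0 := by rw [map_sub, map_one, S.he, sub_self]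

lemma he2' : S.π' (1 - S.e) = 1 := by rw [map_sub, map_one, S.he', sub_zero]

def swap : Split R B A where
  π := S.π'
  π' := S.π
  hπ := S.hπ'
  hπ' := S.hπ
  e := 1 - S.e
  he := S.he2'
  he' := S.he2
  hinj := fun r h h' => S.hinj r h' h

lemma pinj {f g : R[X]} (h1 : f.map S.π = g.map S.π) (h2 : f.map S.π' = g.map S.π') :
    f = g := by
  ext n
  have c1 : S.π (f.coeff n - g.coeff n) = 0 := by
    rw [map_sub]
    have := congrArg (fun p : A[X] => p.coeff n) h1
    simp only [Polynomial.coeff_map] at this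
    rw [this, sub_self]
  have c2 : S.π' (f.coeff n - g.coeff n) = 0 := by
    rw [map_sub]
    have := congrArg (fun p : B[X] => p.coeff n) h2
    simp only [Polynomial.coeff_map] at this
    rw [this, sub_self]
  exact sub_eq_zero.mp (S.hinj _ c1 c2)

noncomputable def mix (g h : R[X]) : R[X] := C S.e * g + C (1 - S.e) * h

lemma mix_map1 (g h : R[X]) : (S.mix g h).map S.π = g.map S.π := by
  simp [mix, Polynomial.map_add, Polynomial.map_mul, Polynomial.map_C, S.he, S.he2]

lemma mix_map2 (g h : R[X]) : (S.mix g h).map S.π' = h.map S.π' := by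
  simp [mix, Polynomial.map_add, Polynomial.map_mul, Polynomial.map_C, S.he', S.he2']

lemma psurj : Function.Surjective (Polynomial.map S.π : R[X] → A[X]) :=
  Polynomial.map_surjective _ S.hπ

lemma isUnit_iff (f : R[X]) : IsUnit f ↔ IsUnit (f.map S.π) ∧ IsUnit (f.map S.π') := by
  constructor
  · intro h
    exact ⟨h.map (Polynomial.mapRingHom S.π), h.map (Polynomial.mapRingHom S.π')⟩
  · rintro ⟨⟨u, hu⟩, ⟨v, hv⟩⟩
    obtain ⟨s, hs⟩ := S.psurj (↑u⁻¹ : A[X])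
    obtain ⟨t, ht⟩ := S.swap.psurj (↑v⁻¹ : B[X])
    refine IsUnit.of_mul_eq_one (a := f) (S.mix s t) (S.pinj ?_ ?_)
    · rw [Polynomial.map_mul, S.mix_map1, hs, ← hu]
      simp [Units.mul_inv]
    · rw [Polynomial.map_mul, S.mix_map2]
      show _ * Polynomial.map S.swap.π t = _
      rw [ht, ← hv]
      simp [Units.mul_inv]

end Split

namespace Split

variable {R A B : Type u} [CommRing R] [CommRing A] [CommRing B] (S : Split R A B)

lemma dvd_of {f g : R[X]} (h1 : f.map S.π ∣ g.map S.π) (h2 : f.map S.π' ∣ g.map S.π') :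
    f ∣ g := by
  obtain ⟨d1, hd1⟩ := h1
  obtain ⟨d2, hd2⟩ := h2
  obtain ⟨s, hs⟩ := S.psurj d1
  obtain ⟨t, ht⟩ := S.swap.psurj d2
  refine ⟨S.mix s t, S.pinj ?_ ?_⟩
  · rw [Polynomial.map_mul, S.mix_map1, hs, hd1]
  · rw [Polynomial.map_mul, S.mix_map2]
    show _ = _ * Polynomial.map S.swap.π t
    rw [ht, hd2]

lemma irred_of {f : R[X]} (h1 : IrredAssoc (f.map S.π)) (h2 : IsUnit (f.map S.π')) :
    IrredAssoc f := by
  constructor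
  · intro hu
    exact h1.1 (((S.isUnit_iff f).mp hu).1)
  · intro b c hbc
    have hbc1 : f.map S.π = b.map S.π * c.map S.π := by
      rw [hbc, Polynomial.map_mul]
    have h2' : IsUnit (b.map S.π' * c.map S.π') := by
      rw [← Polynomial.map_mul, ← hbc]; exact h2
    rcases h1.2 _ _ hbc1 with hs | hs
    · left
      rcases span_singleton_eq_iff.mp hs with ⟨d1, d2⟩
      refine span_singleton_eq_iff.mpr ⟨S.dvd_of d1 (h2.dvd), ⟨c, hbc⟩⟩
    · right
      rcases span_singleton_eq_iff.mp hs with ⟨d1, d2⟩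
      refine span_singleton_eq_iff.mpr ⟨S.dvd_of d1 (h2.dvd), ⟨b, by rw [hbc]; ring⟩⟩

lemma irred_to {f : R[X]} (h2 : IsUnit (f.map S.π')) (hi : IrredAssoc f) :
    IrredAssoc (f.map S.π) := by
  constructor
  · intro hu
    exact hi.1 ((S.isUnit_iff f).mpr ⟨hu, h2⟩)
  · intro b1 c1 h
    obtain ⟨s, hs⟩ := S.psurj b1
    obtain ⟨t, ht⟩ := S.psurj c1
    set b := S.mix s 1 with hbdef
    set c := S.mix t f with hcdef
    have hbπ : b.map S.π = b1 := by rw [hbdef, S.mix_map1, hs]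
    have hcπ : c.map S.π = c1 := by rw [hcdef, S.mix_map1, ht]
    have hbπ' : b.map S.π' = 1 := by rw [hbdef, S.mix_map2, Polynomial.map_one]
    have hcπ' : c.map S.π' = f.map S.π' := by rw [hcdef, S.mix_map2]
    have hbc : f = b * c := by
      refine S.pinj ?_ ?_
      · rw [Polynomial.map_mul, hbπ, hcπ, h]
      · rw [Polynomial.map_mul, hbπ', hcπ', one_mul]
    rcases hi.2 b c hbc with hsp | hsp
    · left
      rcases span_singleton_eq_iff.mp hsp with ⟨d1, d2⟩
      refine span_singleton_eq_iff.mpr ⟨?_, ?_⟩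
      · have := map_dvd (Polynomial.mapRingHom S.π) d1
        simpa [hbπ] using this
      · have := map_dvd (Polynomial.mapRingHom S.π) d2
        simpa [hbπ] using this
    · right
      rcases span_singleton_eq_iff.mp hsp with ⟨d1, d2⟩
      refine span_singleton_eq_iff.mpr ⟨?_, ?_⟩
      · have := map_dvd (Polynomial.mapRingHom S.π) d1
        simpa [hcπ] using this
      · have := map_dvd (Polynomial.mapRingHom S.π) d2
        simpa [hcπ] using this

lemma irred_cases {f : R[X]} (hi : IrredAssoc f) :
    (IrredAssoc (f.map S.π) ∧ IsUnit (f.map S.π')) ∨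
      (IsUnit (f.map S.π) ∧ IrredAssoc (f.map S.π')) := by
  by_cases h2 : IsUnit (f.map S.π')
  · exact Or.inl ⟨S.irred_to h2 hi, h2⟩
  · have h1 : IsUnit (f.map S.π) := by
      by_contra h1
      set b := S.mix f 1 with hbdef
      set c := S.mix 1 f with hcdef
      have hbc : f = b * c := by
        refine S.pinj ?_ ?_
        · rw [Polynomial.map_mul, S.mix_map1, S.mix_map1, Polynomial.map_one, mul_one]
        · rw [Polynomial.map_mul, S.mix_map2, S.mix_map2, Polynomial.map_one, one_mul]
      rcases hi.2 b c hbc with hsp | hsp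
      · have hfb : f ∣ b := (span_singleton_eq_iff.mp hsp).1
        have : f.map S.π' ∣ b.map S.π' := map_dvd (Polynomial.mapRingHom S.π') hfb
        rw [hbdef, S.mix_map2, Polynomial.map_one] at this
        exact h2 (isUnit_of_dvd_one this)
      · have hfc : f ∣ c := (span_singleton_eq_iff.mp hsp).1
        have : f.map S.π ∣ c.map S.π := map_dvd (Polynomial.mapRingHom S.π) hfc
        rw [hcdef, S.mix_map1, Polynomial.map_one] at this
        exact h1 (isUnit_of_dvd_one this)
    exact Or.inr ⟨h1, S.swap.irred_to h1 hi⟩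

end Split

lemma rel_split {α : Type*} (r : α → α → Prop) :
    ∀ (A B A' B' : Multiset α), (∀ x ∈ A, ∀ y ∈ B', ¬ r x y) →
      (∀ x ∈ B, ∀ y ∈ A', ¬ r x y) →
      Multiset.Rel r (A + B) (A' + B') → Multiset.Rel r A A' := by
  intro A
  induction A using Multiset.induction_on with
  | empty =>
    intro B A' B' h1 h2 hrel
    have hA' : A' = 0 := by
      by_contra hA'
      obtain ⟨y, hy⟩ := Multiset.exists_mem_of_ne_zero hA'
      have hy2 : y ∈ A' + B' := Multiset.mem_add.mpr (Or.inl hy)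
      obtain ⟨t, ht⟩ := Multiset.exists_cons_of_mem hy2
      rw [zero_add] at hrel
      have hflip : Multiset.Rel (flip r) (A' + B') B := Multiset.rel_flip.mpr hrel
      rw [ht] at hflip
      rcases Multiset.rel_cons_left.mp hflip with ⟨x, bs', hrxy, _, hbs⟩
      have hxB : x ∈ B := by rw [hbs]; exact Multiset.mem_cons_self _ _
      exact h2 x hxB y hy hrxy
    rw [hA']
    exact Multiset.Rel.zero
  | cons a A0 ih =>
    intro B A' B' h1 h2 hrel
    rw [Multiset.cons_add] at hrel
    rcases Multiset.rel_cons_left.mp hrel with ⟨b, t', hrab, hrel', ht⟩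
    have hbmem : b ∈ A' + B' := by rw [ht]; exact Multiset.mem_cons_self _ _
    rcases Multiset.mem_add.mp hbmem with hbA' | hbB'
    · obtain ⟨A1, hA1⟩ := Multiset.exists_cons_of_mem hbA'
      have ht' : t' = A1 + B' := by
        have : b ::ₘ (A1 + B') = b ::ₘ t' := by
          rw [← Multiset.cons_add, ← hA1, ht]
        exact ((Multiset.cons_inj_right b).mp this).symm
      rw [ht'] at hrel'
      have hrec := ih B A1 B'
        (fun x hx y hy => h1 x (Multiset.mem_cons_of_mem hx) y hy)
        (fun x hx y hy => h2 x hx y (by rw [hA1]; exact Multiset.mem_cons_of_mem hy))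
        hrel'
      rw [hA1]
      exact Multiset.Rel.cons hrab hrec
    · exact absurd hrab (h1 a (Multiset.mem_cons_self _ _) b hbB')

namespace Split

variable {R A B : Type u} [CommRing R] [CommRing A] [CommRing B]

open scoped Classical in
lemma hex_descent (S : Split R A B) (hA : (1 : A) ≠ 0) (l : Multiset R[X])
    (hirr : ∀ f ∈ l, IrredAssoc f) (hprod : l.prod = X ^ 2) :
    ∃ m : Multiset (Polynomial A), (∀ g ∈ m, IrredAssoc g) ∧ m.prod = X ^ 2 ∧
      Multiset.card m = Multiset.card (l.filter (fun f => ¬ IsUnit (f.map S.π))) := by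
  set sU := l.filter (fun f => IsUnit (f.map S.π)) with hsU
  set sN := l.filter (fun f => ¬ IsUnit (f.map S.π)) with hsN
  have hsplit : sU + sN = l := Multiset.filter_add_not _ l
  have hmaptot : (l.map (Polynomial.map S.π)).prod = X ^ 2 := by
    have h := map_multiset_prod (Polynomial.mapRingHom S.π) l
    rw [hprod] at h
    simp only [Polynomial.coe_mapRingHom] at h
    rw [← h]
    simp [Polynomial.map_pow]
  have hprodm : ((sU.map (Polynomial.map S.π)).prod) * ((sN.map (Polynomial.map S.π)).prod)
      = X ^ 2 := by
    rw [← Multiset.prod_add, ← Multiset.map_add, hsplit, hmaptot]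
  have hU : IsUnit (sU.map (Polynomial.map S.π)).prod := by
    refine isUnit_multiset_prod _ (fun x hx => ?_)
    obtain ⟨f, hf, rfl⟩ := Multiset.mem_map.mp hx
    exact (Multiset.mem_filter.mp hf).2
  have hXsqnu : ¬ IsUnit ((X : Polynomial A) ^ 2) := by
    intro h
    exact hA (coeff_zero_not_unit (by simp [Polynomial.coeff_X_pow]) h)
  have hNne : sN.map (Polynomial.map S.π) ≠ 0 := by
    intro h0
    have hsN0 : sN = 0 := by simpa [Multiset.map_eq_zero] using h0
    rw [hsN0] at hprodm
    simp only [Multiset.map_zero, Multiset.prod_zero, mul_one] at hprodm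
    rw [hprodm] at hU
    exact hXsqnu hU
  obtain ⟨g0, hg0⟩ := Multiset.exists_mem_of_ne_zero hNne
  obtain ⟨rest, hrest⟩ := Multiset.exists_cons_of_mem hg0
  have hirrN : ∀ g ∈ sN.map (Polynomial.map S.π), IrredAssoc g := by
    intro g hg
    obtain ⟨f, hf, rfl⟩ := Multiset.mem_map.mp hg
    have hfl := Multiset.mem_filter.mp hf
    rcases S.irred_cases (hirr f hfl.1) with h | h
    · exact h.1
    · exact absurd h.1 hfl.2
  refine ⟨(g0 * (sU.map (Polynomial.map S.π)).prod) ::ₘ rest, ?_, ?_, ?_⟩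
  · intro g hg
    rcases Multiset.mem_cons.mp hg with rfl | hg
    · exact unit_mul_irred (hirrN g0 hg0) hU
    · exact hirrN g (by rw [hrest]; exact Multiset.mem_cons_of_mem hg)
  · rw [Multiset.prod_cons]
    calc g0 * (sU.map (Polynomial.map S.π)).prod * rest.prod
        = (sU.map (Polynomial.map S.π)).prod * (g0 * rest.prod) := by ring
      _ = (sU.map (Polynomial.map S.π)).prod * (sN.map (Polynomial.map S.π)).prod := by
          rw [← Multiset.prod_cons, ← hrest]
      _ = X ^ 2 := hprodm
  · rw [Multiset.card_cons]
    have := congrArg Multiset.card hrest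
    rw [Multiset.card_map] at this
    rw [Multiset.card_cons] at this
    omega

lemma huniq_descent (S : Split R A B)
    (huniqR : ∀ l₁ l₂ : Multiset (Polynomial R),
      (∀ f ∈ l₁, IrredAssoc f) → (∀ f ∈ l₂, IrredAssoc f) →
      l₁.prod = (Polynomial.X : Polynomial R) ^ 2 →
      l₂.prod = (Polynomial.X : Polynomial R) ^ 2 →
      Multiset.Rel (fun f g => ∃ u : (Polynomial R)ˣ, f = g * (u : Polynomial R)) l₁ l₂)
    (k : Multiset (Polynomial B)) (hk : ∀ g ∈ k, IrredAssoc g) (hkp : k.prod = X ^ 2) :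
    ∀ m₁ m₂ : Multiset (Polynomial A),
      (∀ f ∈ m₁, IrredAssoc f) → (∀ f ∈ m₂, IrredAssoc f) →
      m₁.prod = (Polynomial.X : Polynomial A) ^ 2 →
      m₂.prod = (Polynomial.X : Polynomial A) ^ 2 →
      Multiset.Rel (fun f g => ∃ u : (Polynomial A)ˣ, f = g * (u : Polynomial A)) m₁ m₂ := by
  classical
  intro m₁ m₂ hm₁ hm₂ hp₁ hp₂
  set σ₁ : Polynomial A → R[X] := fun g => Classical.choose (S.psurj g) with hσ₁def
  have hσ₁ : ∀ g, (σ₁ g).map S.π = g := fun g => Classical.choose_spec (S.psurj g)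
  set σ₂ : Polynomial B → R[X] := fun h => Classical.choose (S.swap.psurj h) with hσ₂def
  have hσ₂ : ∀ h, (σ₂ h).map S.π' = h := fun h => Classical.choose_spec (S.swap.psurj h)
  set L₁ : Polynomial A → R[X] := fun g => S.mix (σ₁ g) 1 with hL₁def
  set L₂ : Polynomial B → R[X] := fun h => S.mix 1 (σ₂ h) with hL₂def
  have hL₁π : ∀ g, (L₁ g).map S.π = g := fun g => by
    rw [hL₁def]; simp only []; rw [S.mix_map1, hσ₁]
  have hL₁π' : ∀ g, (L₁ g).map S.π' = 1 := fun g => by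
    rw [hL₁def]; simp only []; rw [S.mix_map2, Polynomial.map_one]
  have hL₂π : ∀ h, (L₂ h).map S.π = 1 := fun h => by
    rw [hL₂def]; simp only []; rw [S.mix_map1, Polynomial.map_one]
  have hL₂π' : ∀ h, (L₂ h).map S.π' = h := fun h => by
    rw [hL₂def]; simp only []; rw [S.mix_map2, hσ₂]
  have hMirr : ∀ (m : Multiset (Polynomial A)), (∀ f ∈ m, IrredAssoc f) →
      ∀ f ∈ m.map L₁ + k.map L₂, IrredAssoc f := by
    intro m hm f hf
    rcases Multiset.mem_add.mp hf with hf | hf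
    · obtain ⟨g, hg, rfl⟩ := Multiset.mem_map.mp hf
      exact S.irred_of (by rw [hL₁π]; exact hm g hg) (by rw [hL₁π']; exact isUnit_one)
    · obtain ⟨h, hh, rfl⟩ := Multiset.mem_map.mp hf
      refine S.swap.irred_of ?_ ?_
      · show IrredAssoc ((L₂ h).map S.π')
        rw [hL₂π']; exact hk h hh
      · show IsUnit ((L₂ h).map S.π)
        rw [hL₂π]; exact isUnit_one
  have hMprod : ∀ (m : Multiset (Polynomial A)), m.prod = (X : Polynomial A) ^ 2 →
      (m.map L₁ + k.map L₂).prod = (X : Polynomial R) ^ 2 := by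
    intro m hmp
    refine S.pinj ?_ ?_
    · have h := map_multiset_prod (Polynomial.mapRingHom S.π) (m.map L₁ + k.map L₂)
      simp only [Polynomial.coe_mapRingHom] at h
      rw [h, Multiset.map_add, Multiset.map_map, Multiset.map_map]
      have e1 : m.map ((Polynomial.map S.π) ∘ L₁) = m := by
        rw [show (Polynomial.map S.π) ∘ L₁ = id from funext fun g => hL₁π g, Multiset.map_id]
      have e2 : k.map ((Polynomial.map S.π) ∘ L₂) = k.map (fun _ => (1 : Polynomial A)) := by
        apply Multiset.map_congr rfl
        intro h' _
        exact hL₂π h'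
      rw [e1, e2, Multiset.prod_add, hmp]
      rw [Multiset.map_const', Multiset.prod_replicate, one_pow, mul_one]
      simp [Polynomial.map_pow]
    · have h := map_multiset_prod (Polynomial.mapRingHom S.π') (m.map L₁ + k.map L₂)
      simp only [Polynomial.coe_mapRingHom] at h
      rw [h, Multiset.map_add, Multiset.map_map, Multiset.map_map]
      have e1 : m.map ((Polynomial.map S.π') ∘ L₁) = m.map (fun _ => (1 : Polynomial B)) := by
        apply Multiset.map_congr rfl
        intro g _
        exact hL₁π' g
      have e2 : k.map ((Polynomial.map S.π') ∘ L₂) = k := by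
        rw [show (Polynomial.map S.π') ∘ L₂ = id from funext fun g => hL₂π' g, Multiset.map_id]
      rw [e1, e2, Multiset.prod_add, hkp]
      rw [Multiset.map_const', Multiset.prod_replicate, one_pow, one_mul]
      simp [Polynomial.map_pow]
  have hrel := huniqR (m₁.map L₁ + k.map L₂) (m₂.map L₁ + k.map L₂)
    (hMirr m₁ hm₁) (hMirr m₂ hm₂) (hMprod m₁ hp₁) (hMprod m₂ hp₂)
  have hsplit := rel_split _ (m₁.map L₁) (k.map L₂) (m₂.map L₁) (k.map L₂)
    (by
      rintro x hx y hy ⟨u, hu⟩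
      obtain ⟨g, hg, rfl⟩ := Multiset.mem_map.mp hx
      obtain ⟨h', hh', rfl⟩ := Multiset.mem_map.mp hy
      have := congrArg (Polynomial.map S.π) hu
      rw [Polynomial.map_mul, hL₁π, hL₂π, one_mul] at this
      refine (hm₁ g hg).1 ?_
      rw [this]
      exact (u.isUnit.map (Polynomial.mapRingHom S.π))
    )
    (by
      rintro x hx y hy ⟨u, hu⟩
      obtain ⟨h', hh', rfl⟩ := Multiset.mem_map.mp hx
      obtain ⟨g, hg, rfl⟩ := Multiset.mem_map.mp hy
      have := congrArg (Polynomial.map S.π') hu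
      rw [Polynomial.map_mul, hL₂π', hL₁π', one_mul] at this
      refine (hk h' hh').1 ?_
      rw [this]
      exact (u.isUnit.map (Polynomial.mapRingHom S.π'))
    )
    hrel
  have hrel2 := Multiset.rel_map.mp hsplit
  refine Multiset.Rel.mono hrel2 ?_
  rintro g hg g' hg' ⟨u, hu⟩
  refine ⟨Units.map (Polynomial.mapRingHom S.π).toMonoidHom u, ?_⟩
  have := congrArg (Polynomial.map S.π) hu
  rw [Polynomial.map_mul, hL₁π, hL₁π] at this
  rw [this]
  congr 1

end Split
universe v

open scoped Classical in
theorem aux : ∀ (n : ℕ) (R : Type v) [CommRing R] (l : Multiset (Polynomial R)),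
    (∀ f ∈ l, IrredAssoc f) → l.prod = (Polynomial.X : Polynomial R) ^ 2 →
    (∀ l₁ l₂ : Multiset (Polynomial R),
      (∀ f ∈ l₁, IrredAssoc f) → (∀ f ∈ l₂, IrredAssoc f) →
      l₁.prod = (Polynomial.X : Polynomial R) ^ 2 →
      l₂.prod = (Polynomial.X : Polynomial R) ^ 2 →
      Multiset.Rel (fun f g => ∃ u : (Polynomial R)ˣ, f = g * (u : Polynomial R)) l₁ l₂) →
    Multiset.card l ≤ n → ∀ a : R, a ^ 2 = 0 → a = 0 := by
  intro n
  induction n with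
  | zero =>
    intro R _ l hirr hprod _ hcard a ha
    have hl0 : l = 0 := Multiset.card_eq_zero.mp (Nat.le_zero.mp hcard)
    rw [hl0, Multiset.prod_zero] at hprod
    have h10 : (1 : R) = 0 := by
      have := congrArg (fun p : R[X] => p.coeff 0) hprod
      simpa [Polynomial.coeff_X_pow] using this
    calc a = a * 1 := (mul_one a).symm
      _ = 0 := by rw [h10, mul_zero]
  | succ n IH =>
    intro R instR l hirr hprod huniq hcard a ha
    by_cases hXirr : IrredAssoc (X : R[X])
    · exact caseA hXirr huniq ha
    by_cases hXu : IsUnit (X : R[X])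
    · have h10 : (1 : R) = 0 := coeff_zero_not_unit Polynomial.coeff_X_zero hXu
      calc a = a * 1 := (mul_one a).symm
        _ = 0 := by rw [h10, mul_zero]
    -- extract a nontrivial factorization of X
    have h' : ∃ b c : R[X], X = b * c ∧
        ¬(Ideal.span {(X : R[X])} = Ideal.span {b} ∨
          Ideal.span {(X : R[X])} = Ideal.span {c}) := by
      by_contra hall
      push_neg at hall
      exact hXirr ⟨hXu, hall⟩
    obtain ⟨b, c, hbc, hnsp⟩ := h'
    rw [not_or] at hnsp
    obtain ⟨hsb, hsc⟩ := hnsp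
    -- coefficient identities
    have h0 : b.coeff 0 * c.coeff 0 = 0 := by
      have := congrArg (fun p : R[X] => p.coeff 0) hbc
      simpa [Polynomial.mul_coeff_zero, Polynomial.coeff_X_zero] using this.symm
    have h1 : b.coeff 0 * c.coeff 1 + b.coeff 1 * c.coeff 0 = 1 := by
      have h := congrArg (fun p : R[X] => p.coeff 1) hbc
      simp only [Polynomial.coeff_X_one] at h
      rw [Polynomial.coeff_mul, Finset.Nat.sum_antidiagonal_eq_sum_range_succ_mk] at h
      simp [Finset.sum_range_succ] at h
      linear_combination -h
    have hee : (b.coeff 0 * c.coeff 1) * (b.coeff 0 * c.coeff 1) = b.coeff 0 * c.coeff 1 := by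
      linear_combination (b.coeff 0 * c.coeff 1) * h1 - (c.coeff 1 * b.coeff 1) * h0
    have he1 : b.coeff 0 * c.coeff 1 ≠ 1 := by
      intro h
      have hc0 : c.coeff 0 = 0 := by
        linear_combination (-(c.coeff 0)) * h + c.coeff 1 * h0
      have hXc : (X : R[X]) ∣ c := Polynomial.X_dvd_iff.mpr hc0
      exact hsc (span_singleton_eq_iff.mpr ⟨hXc, ⟨b, by rw [hbc]; ring⟩⟩)
    have he0 : b.coeff 0 * c.coeff 1 ≠ 0 := by
      intro h
      have hb0 : b.coeff 0 = 0 := by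
        linear_combination (b.coeff 0) * h + (b.coeff 1) * h0 - (b.coeff 0) * h1
      have hXb : (X : R[X]) ∣ b := Polynomial.X_dvd_iff.mpr hb0
      exact hsb (span_singleton_eq_iff.mpr ⟨hXb, ⟨c, hbc⟩⟩)
    clear h0 h1 hbc hsb hsc hXirr hXu
    obtain ⟨e, hee, he0, he1⟩ : ∃ e : R, e * e = e ∧ e ≠ 0 ∧ e ≠ 1 :=
      ⟨_, hee, he0, he1⟩
    -- build the splitting
    set I1 := Ideal.span ({1 - e} : Set R) with hI1
    set I2 := Ideal.span ({e} : Set R) with hI2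
    have hmke : Ideal.Quotient.mk I1 e = 1 := by
      rw [← map_one (Ideal.Quotient.mk I1)]
      rw [Ideal.Quotient.mk_eq_mk_iff_sub_mem]
      exact Ideal.mem_span_singleton.mpr ⟨-1, by ring⟩
    have hmke' : Ideal.Quotient.mk I2 e = 0 :=
      Ideal.Quotient.eq_zero_iff_mem.mpr (Ideal.subset_span rfl)
    have hinj : ∀ r : R, Ideal.Quotient.mk I1 r = 0 → Ideal.Quotient.mk I2 r = 0 → r = 0 := by
      intro r hr1 hr2
      obtain ⟨s, hs⟩ := Ideal.mem_span_singleton.mp (Ideal.Quotient.eq_zero_iff_mem.mp hr1)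
      obtain ⟨t, ht⟩ := Ideal.mem_span_singleton.mp (Ideal.Quotient.eq_zero_iff_mem.mp hr2)
      have k1 : e * r = 0 := by rw [hs]; linear_combination (-s) * hee
      have k2 : (1 - e) * r = 0 := by rw [ht]; linear_combination (-t) * hee
      linear_combination k1 + k2
    set S : Split R (R ⧸ I1) (R ⧸ I2) :=
      { π := Ideal.Quotient.mk I1
        π' := Ideal.Quotient.mk I2
        hπ := Ideal.Quotient.mk_surjective
        hπ' := Ideal.Quotient.mk_surjective
        e := e
        he := hmke
        he' := hmke'
        hinj := hinj } with hSdef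
    have h1A : (1 : R ⧸ I1) ≠ 0 := by
      intro h
      have h1m : Ideal.Quotient.mk I1 (1 : R) = 0 := by simpa using h
      obtain ⟨s, hs⟩ := Ideal.mem_span_singleton.mp (Ideal.Quotient.eq_zero_iff_mem.mp h1m)
      refine he0 ?_
      calc e = e * 1 := (mul_one e).symm
        _ = e * ((1 - e) * s) := by rw [← hs]
        _ = (e - e * e) * s := by ring
        _ = (e - e) * s := by rw [hee]
        _ = 0 := by ring
    have h1B : (1 : R ⧸ I2) ≠ 0 := by
      intro h
      have h1m : Ideal.Quotient.mk I2 (1 : R) = 0 := by simpa using h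
      obtain ⟨s, hs⟩ := Ideal.mem_span_singleton.mp (Ideal.Quotient.eq_zero_iff_mem.mp h1m)
      refine he1 ?_
      calc e = e * 1 := (mul_one e).symm
        _ = e * (e * s) := by rw [← hs]
        _ = (e * e) * s := by ring
        _ = e * s := by rw [hee]
        _ = 1 := hs.symm
    -- descend the data
    obtain ⟨mA, hmairr, hmaprod, hmacard⟩ := S.hex_descent h1A l hirr hprod
    obtain ⟨mB, hmbirr, hmbprod, hmbcard⟩ := S.swap.hex_descent h1B l hirr hprod
    have huniqA := S.huniq_descent huniq mB hmbirr hmbprod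
    have huniqB := S.swap.huniq_descent huniq mA hmairr hmaprod
    -- cardinalities
    have hswappi : S.swap.π = S.π' := rfl
    have hcompl : ∀ f ∈ l, (¬ IsUnit (f.map S.π') ↔ IsUnit (f.map S.π)) := by
      intro f hf
      rcases S.irred_cases (hirr f hf) with ⟨hi, hu⟩ | ⟨hu, hi⟩
      · constructor
        · intro h; exact absurd hu h
        · intro h; exact absurd h hi.1
      · constructor
        · intro _; exact hu
        · intro _; exact hi.1
    have hfiltB : l.filter (fun f => ¬ IsUnit (f.map S.π')) =
        l.filter (fun f => IsUnit (f.map S.π)) := by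
      apply Multiset.filter_congr
      intro f hf
      exact hcompl f hf
    have hsum : Multiset.card (l.filter (fun f => IsUnit (f.map S.π))) +
        Multiset.card (l.filter (fun f => ¬ IsUnit (f.map S.π))) = Multiset.card l := by
      rw [← Multiset.card_add, Multiset.filter_add_not]
    have hApos : 0 < Multiset.card (l.filter (fun f => ¬ IsUnit (f.map S.π))) := by
      rw [Multiset.card_pos_iff_exists_mem]
      by_contra hno
      push_neg at hno
      have hallu : ∀ f ∈ l, IsUnit (f.map S.π) := by
        intro f hf
        by_contra hq
        exact hno f (Multiset.mem_filter.mpr ⟨hf, hq⟩)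
      have hXsq : IsUnit ((X : Polynomial (R ⧸ I1)) ^ 2) := by
        have h := map_multiset_prod (Polynomial.mapRingHom S.π) l
        rw [hprod] at h
        simp only [Polynomial.coe_mapRingHom] at h
        have : IsUnit (l.map (Polynomial.map S.π)).prod := by
          refine isUnit_multiset_prod _ (fun x hx => ?_)
          obtain ⟨f, hf, rfl⟩ := Multiset.mem_map.mp hx
          exact hallu f hf
        rw [← h] at this
        simpa [Polynomial.map_pow] using this
      exact h1A (coeff_zero_not_unit (by simp [Polynomial.coeff_X_pow]) hXsq)
    have hBpos : 0 < Multiset.card (l.filter (fun f => ¬ IsUnit (f.map S.π'))) := by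
      rw [Multiset.card_pos_iff_exists_mem]
      by_contra hno
      push_neg at hno
      have hallu : ∀ f ∈ l, IsUnit (f.map S.π') := by
        intro f hf
        by_contra hq
        exact hno f (Multiset.mem_filter.mpr ⟨hf, hq⟩)
      have hXsq : IsUnit ((X : Polynomial (R ⧸ I2)) ^ 2) := by
        have h := map_multiset_prod (Polynomial.mapRingHom S.π') l
        rw [hprod] at h
        simp only [Polynomial.coe_mapRingHom] at h
        have : IsUnit (l.map (Polynomial.map S.π')).prod := by
          refine isUnit_multiset_prod _ (fun x hx => ?_)
          obtain ⟨f, hf, rfl⟩ := Multiset.mem_map.mp hx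
          exact hallu f hf
        rw [← h] at this
        simpa [Polynomial.map_pow] using this
      exact h1B (coeff_zero_not_unit (by simp [Polynomial.coeff_X_pow]) hXsq)
    have hcardA : Multiset.card mA ≤ n := by
      rw [hmacard]
      have := hBpos
      rw [hfiltB] at this
      omega
    have hcardB : Multiset.card mB ≤ n := by
      rw [hswappi] at hmbcard
      rw [hmbcard, hfiltB]
      omega
    -- apply the induction hypothesis on both sides
    have ha1 : Ideal.Quotient.mk I1 a = 0 := by
      refine IH (R ⧸ I1) mA hmairr hmaprod huniqA hcardA _ ?_
      rw [← map_pow, ha]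
      exact _root_.map_zero _
    have ha2 : Ideal.Quotient.mk I2 a = 0 := by
      refine IH (R ⧸ I2) mB hmbirr hmbprod huniqB hcardB _ ?_
      rw [← map_pow, ha]
      exact _root_.map_zero _
    exact hinj a ha1 ha2
theorem reduced_of_X_sq_UF {R : Type*} [CommRing R]
    (hex : ∃ l : Multiset (Polynomial R),
      (∀ f ∈ l, IrredAssoc f) ∧ l.prod = (Polynomial.X : Polynomial R) ^ 2)
    (huniq : ∀ l₁ l₂ : Multiset (Polynomial R),
      (∀ f ∈ l₁, IrredAssoc f) → (∀ f ∈ l₂, IrredAssoc f) →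
      l₁.prod = (Polynomial.X : Polynomial R) ^ 2 →
      l₂.prod = (Polynomial.X : Polynomial R) ^ 2 →
      Multiset.Rel (fun f g => ∃ u : (Polynomial R)ˣ, f = g * (u : Polynomial R)) l₁ l₂) :
    IsReduced R := by
  obtain ⟨l, hirr, hprod⟩ := hex
  have key : ∀ b : R, b ^ 2 = 0 → b = 0 := fun b hb =>
    aux (Multiset.card l) R l hirr hprod huniq le_rfl b hb
  have allpow : ∀ (n : ℕ) (x : R), x ^ n = 0 → x = 0 := by
    intro n
    induction n using Nat.strong_induction_on with
    | _ n IH =>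
      intro x hx
      match n, hx with
      | 0, hx =>
        have h10 : (1 : R) = 0 := by simpa using hx
        calc x = x * 1 := (mul_one x).symm
          _ = 0 := by rw [h10, mul_zero]
      | 1, hx => simpa using hx
      | (k + 2), hx =>
        have h2 : (x ^ (k + 1)) ^ 2 = 0 := by
          have hcalc : (k + 1) * 2 = (k + 2) + k := by ring
          rw [← pow_mul, hcalc, pow_add, hx, zero_mul]
        exact IH (k + 1) (by omega) x (key _ h2)
  exact ⟨fun x hx => by obtain ⟨n, hn⟩ := hx; exact allpow n x hn⟩
end

section
/- Let R be a commutative ring such that every regular nonunit of R[X] is a product of irreducible elements and any two factorizations of a regular nonunit into irreducibles are homomorphic. If a, b ∈ R are nonzero with ab = 0, then a contradiction arises; hence if R is additionally indecomposable, R is an integral domain. -/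
open Polynomial

section Indecomposable

variable {R : Type*} [CommRing R]

/-- For `x * a + y * b = 1` and `a * b = 0`, the element `x * a` is idempotent. -/
theorem IsCoprime.eq_zero_or_eq_zero_of_mul_eq_zero
    (hind : ∀ e : R, e * e = e → e = 0 ∨ e = 1) {a b : R} (hab : IsCoprime a b)
    (h : a * b = 0) : a = 0 ∨ b = 0 := by
  obtain ⟨x, y, hxy⟩ := hab
  have hidem : x * a * (x * a) = x * a := by linear_combination (x * a) * hxy - x * y * h
  rcases hind _ hidem with h0 | h1
  · left
    linear_combination -a * hxy + a * h0 + y * h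
  · right
    linear_combination -b * h1 + x * h

/-- Differentiating `p * q = X - C c` and evaluating at `c` gives a Bézout relation. -/
theorem isCoprime_eval_of_mul_eq_X_sub_C {p q : R[X]} {c : R} (h : p * q = X - C c) :
    IsCoprime (p.eval c) (q.eval c) := by
  refine ⟨(derivative q).eval c, (derivative p).eval c, ?_⟩
  have hder := congrArg (fun r => (derivative r).eval c) h
  simp only [derivative_mul, derivative_sub, derivative_X, derivative_C, sub_zero, eval_add,
    eval_mul, eval_one] at hder
  linear_combination hder

theorem X_sub_C_dvd_or_dvd_of_mul_eq (hind : ∀ e : R, e * e = e → e = 0 ∨ e = 1)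
    {p q : R[X]} {c : R} (h : p * q = X - C c) : X - C c ∣ p ∨ X - C c ∣ q := by
  simp only [dvd_iff_isRoot, IsRoot.def]
  refine (isCoprime_eval_of_mul_eq_X_sub_C h).eq_zero_or_eq_zero_of_mul_eq_zero hind ?_
  rw [← eval_mul, h, eval_sub, eval_X, eval_C, sub_self]

theorem irredAssoc_of_dvd_or_dvd {S : Type*} [CommRing S] {a : S} (hu : ¬IsUnit a)
    (h : ∀ b c : S, a = b * c → a ∣ b ∨ a ∣ c) : IrredAssoc a := by
  refine ⟨hu, fun b c habc => ?_⟩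
  rcases h b c habc with hb | hc
  · exact .inl (le_antisymm (Ideal.span_singleton_le_span_singleton.mpr ⟨c, habc⟩)
      (Ideal.span_singleton_le_span_singleton.mpr hb))
  · exact .inr (le_antisymm
      (Ideal.span_singleton_le_span_singleton.mpr ⟨b, habc.trans (mul_comm _ _)⟩)
      (Ideal.span_singleton_le_span_singleton.mpr hc))

theorem irredAssoc_X_sub_C [Nontrivial R] (hind : ∀ e : R, e * e = e → e = 0 ∨ e = 1)
    (c : R) : IrredAssoc (X - C c) :=
  irredAssoc_of_dvd_or_dvd (not_isUnit_X_sub_C c) fun _ _ h =>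
    X_sub_C_dvd_or_dvd_of_mul_eq hind h.symm

end Indecomposable

theorem eq_of_span_X_sub_C_eq {R : Type*} [CommRing R] {c d : R}
    (h : Ideal.span {X - C c} = Ideal.span {(X - C d : R[X])}) : c = d := by
  have hdvd := Ideal.span_singleton_le_span_singleton.mp h.le
  rw [dvd_iff_isRoot, IsRoot.def, eval_sub, eval_X, eval_C, sub_eq_zero] at hdvd
  exact hdvd.symm

theorem X_sub_C_mul_X_sub_C_of_mul_eq_zero {R : Type*} [CommRing R] {a b : R} (h : a * b = 0) :
    (X - C a) * (X - C b) = (X - C 0) * (X - C (a + b)) := by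
  have hC : C a * C b = 0 := by rw [← C_mul, h, C_0]
  rw [C_0, C_add]
  linear_combination hC

theorem domain_of_regular_factorizations_homomorphic_general {R : Type*} [CommRing R] [Nontrivial R]
    (hhom : ∀ f : Polynomial R, (∀ c : Polynomial R, c * f = 0 → c = 0) → ¬IsUnit f →
      ∀ l₁ l₂ : Multiset (Polynomial R),
        (∀ g ∈ l₁, IrredAssoc g) → (∀ g ∈ l₂, IrredAssoc g) →
        l₁.prod = f → l₂.prod = f →
        (∀ g ∈ l₁, ∃ h ∈ l₂, Ideal.span {g} = Ideal.span {h}) ∧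
        (∀ g ∈ l₂, ∃ h ∈ l₁, Ideal.span {g} = Ideal.span {h}))
    (hind : ∀ e : R, e * e = e → e = 0 ∨ e = 1) :
    IsDomain R := by
  refine @NoZeroDivisors.to_isDomain R _ _ ⟨fun {a b} hab => ?_⟩
  have hirr := irredAssoc_X_sub_C hind
  have hmonic : ((X - C a) * (X - C b)).Monic := (monic_X_sub_C a).mul (monic_X_sub_C b)
  obtain ⟨-, hback⟩ := hhom _ (fun _ => hmonic.mul_left_eq_zero_iff.mp)
    (not_isUnit_of_not_isUnit_dvd (hirr a).1 (dvd_mul_right _ _))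
    {X - C a, X - C b} {X - C 0, X - C (a + b)}
    (by simp only [Multiset.insert_eq_cons, Multiset.mem_cons, Multiset.mem_singleton]
        rintro _ (rfl | rfl) <;> exact hirr _)
    (by simp only [Multiset.insert_eq_cons, Multiset.mem_cons, Multiset.mem_singleton]
        rintro _ (rfl | rfl) <;> exact hirr _)
    (by simp) (by simp [X_sub_C_mul_X_sub_C_of_mul_eq_zero hab])
  obtain ⟨g, hg, hspan⟩ := hback (X - C 0) (by simp)
  simp only [Multiset.insert_eq_cons, Multiset.mem_cons, Multiset.mem_singleton] at hg
  rcases hg with rfl | rfl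
  · exact .inl (eq_of_span_X_sub_C_eq hspan).symm
  · exact .inr (eq_of_span_X_sub_C_eq hspan).symm

theorem domain_of_regular_factorizations_homomorphic {R : Type*} [CommRing R] [Nontrivial R]
    (hatomic : ∀ f : Polynomial R, (∀ c : Polynomial R, c * f = 0 → c = 0) → ¬IsUnit f →
      ∃ l : Multiset (Polynomial R), (∀ g ∈ l, IrredAssoc g) ∧ l.prod = f)
    (hhom : ∀ f : Polynomial R, (∀ c : Polynomial R, c * f = 0 → c = 0) → ¬IsUnit f →
      ∀ l₁ l₂ : Multiset (Polynomial R),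
        (∀ g ∈ l₁, IrredAssoc g) → (∀ g ∈ l₂, IrredAssoc g) →
        l₁.prod = f → l₂.prod = f →
        (∀ g ∈ l₁, ∃ h ∈ l₂, Ideal.span {g} = Ideal.span {h}) ∧
        (∀ g ∈ l₂, ∃ h ∈ l₁, Ideal.span {g} = Ideal.span {h}))
    (hind : ∀ e : R, e * e = e → e = 0 ∨ e = 1) :
    IsDomain R :=
  domain_of_regular_factorizations_homomorphic_general hhom hind
end

section
/- Let R be a commutative ring that is reduced and indecomposable, and let n ≥ 1. Then every irreducible factor of X^n in R[X] equals uX for some unit u of R. -/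
open Polynomial

lemma coeff_orthog {R : Type*} [CommRing R] [IsReduced R] {f g : R[X]} {n : ℕ}
    (h : f * g = X ^ n) {i j : ℕ} (hij : i ≠ j) : f.coeff i * f.coeff j = 0 := by
  have hnil : f.coeff i * f.coeff j ∈ nilradical R := by
    rw [nilradical_eq_sInf]
    refine Ideal.mem_sInf.mpr ?_
    rintro p (hp : p.IsPrime)
    haveI := hp
    set φ := Ideal.Quotient.mk p
    have hdvd : f.map φ ∣ (X : (R ⧸ p)[X]) ^ n := by
      refine ⟨g.map φ, ?_⟩
      rw [← Polynomial.map_mul, h, Polynomial.map_pow, map_X]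
    obtain ⟨m, hm, u, hu⟩ := (dvd_prime_pow Polynomial.prime_X n).mp hdvd
    obtain ⟨c, hc, hcu⟩ := Polynomial.isUnit_iff.mp (u⁻¹).isUnit
    have hf : f.map φ = C c * X ^ m := by
      have : f.map φ = X ^ m * ((u⁻¹ : (R ⧸ p)[X]ˣ) : (R ⧸ p)[X]) := (Units.eq_mul_inv_iff_mul_eq u).mpr hu
      rw [this, ← hcu, mul_comm]
    have hcoeff : ∀ d : ℕ, (f.map φ).coeff d = if d = m then c else 0 := by
      intro d
      rw [hf, coeff_C_mul, coeff_X_pow]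
      split <;> simp
    have : φ (f.coeff i * f.coeff j) = 0 := by
      rw [map_mul, ← coeff_map, ← coeff_map, hcoeff, hcoeff]
      rcases eq_or_ne i m with rfl | hi
      · simp [Ne.symm hij]
      · simp [hi]
    exact Ideal.Quotient.eq_zero_iff_mem.mp this
  exact (mem_nilradical.mp hnil).eq_zero

theorem irreducible_factor_of_Xn_eq_unit_mul_X {R : Type*} [CommRing R] [IsReduced R]
    (hind : ∀ e : R, e * e = e → e = 0 ∨ e = 1)
    (n : ℕ) (hn : 1 ≤ n) (f : Polynomial R)
    (hfu : ¬IsUnit f)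
    (hirr : ∀ g h : Polynomial R, f = g * h →
      Ideal.span {f} = Ideal.span {g} ∨ Ideal.span {f} = Ideal.span {h})
    (hfactor : ∃ g : Polynomial R, (Polynomial.X : Polynomial R) ^ n = f * g) :
    ∃ u : R, IsUnit u ∧ f = Polynomial.C u * Polynomial.X := by
  obtain ⟨g, hg⟩ := hfactor
  have hg' : f * g = X ^ n := hg.symm
  haveI : Nontrivial R := by
    by_contra h
    rw [not_nontrivial_iff_subsingleton] at h
    exact hfu (isUnit_of_subsingleton f)
  have horth : ∀ i j : ℕ, i ≠ j → f.coeff i * f.coeff j = 0 :=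
    fun i j hij => coeff_orthog hg' hij
  have hsum : ∑ q ∈ Finset.HasAntidiagonal.antidiagonal n, f.coeff q.1 * g.coeff q.2 = 1 := by
    have := congrArg (fun p => Polynomial.coeff p n) hg'
    simpa [coeff_mul, coeff_X_pow] using this
  have hex : ∃ q ∈ Finset.HasAntidiagonal.antidiagonal n, f.coeff q.1 * g.coeff q.2 ≠ 0 := by
    by_contra hall
    push_neg at hall
    rw [Finset.sum_eq_zero hall] at hsum
    exact zero_ne_one hsum
  obtain ⟨q, hq, hqne⟩ := hex
  have hfirst : ∀ r ∈ Finset.HasAntidiagonal.antidiagonal n, r ≠ q → r.1 ≠ q.1 := by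
    intro r hr hrq
    rw [Finset.HasAntidiagonal.mem_antidiagonal] at hr hq
    intro h1
    apply hrq
    have : r.2 = q.2 := by omega
    exact Prod.ext h1 this
  have hidem : (f.coeff q.1 * g.coeff q.2) * (f.coeff q.1 * g.coeff q.2)
      = f.coeff q.1 * g.coeff q.2 := by
    conv_rhs => rw [← mul_one (f.coeff q.1 * g.coeff q.2), ← hsum, Finset.mul_sum]
    rw [Finset.sum_eq_single q]
    · intro r hr hrq
      have h0 : f.coeff q.1 * f.coeff r.1 = 0 := horth _ _ (Ne.symm (hfirst r hr hrq))
      calc f.coeff q.1 * g.coeff q.2 * (f.coeff r.1 * g.coeff r.2)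
          = (f.coeff q.1 * f.coeff r.1) * (g.coeff q.2 * g.coeff r.2) := by ring
        _ = 0 := by rw [h0, zero_mul]
    · intro h; exact absurd hq h
  have he1 : f.coeff q.1 * g.coeff q.2 = 1 := by
    rcases hind _ hidem with h0 | h1
    · exact absurd h0 hqne
    · exact h1
  obtain ⟨k, b, a, hak, hb, hab⟩ :
      ∃ (k : ℕ) (b a : R), f.coeff k = a ∧ g.coeff (n - k) = b ∧ a * b = 1 := by
    refine ⟨q.1, g.coeff q.2, f.coeff q.1, rfl, ?_, he1⟩
    rw [Finset.HasAntidiagonal.mem_antidiagonal] at hq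
    congr 1
    omega
  have hu : IsUnit a := IsUnit.of_mul_eq_one _ hab
  have hcoeffs : ∀ m : ℕ, m ≠ k → f.coeff m = 0 := by
    intro m hm
    calc f.coeff m = f.coeff m * (a * b) := by rw [hab, mul_one]
      _ = (f.coeff m * f.coeff k) * b := by rw [hak]; ring
      _ = 0 := by rw [horth _ _ hm, zero_mul]
  have hf : f = C a * X ^ k := by
    ext m
    rw [coeff_C_mul, coeff_X_pow]
    rcases eq_or_ne m k with rfl | hm
    · rw [if_pos rfl, mul_one, hak]
    · rw [if_neg hm, mul_zero, hcoeffs m hm]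
  have ha0 : a ≠ 0 := by
    intro h0
    rw [h0, zero_mul] at hab
    exact zero_ne_one hab
  have hk0 : k ≠ 0 := by
    intro h0
    apply hfu
    rw [hf, h0, pow_zero, mul_one]
    exact Polynomial.isUnit_C.mpr hu
  have hk1 : k = 1 := by
    by_contra hkne
    have hk2 : 2 ≤ k := by omega
    have hxk : (X : R[X]) ^ k = X * X ^ (k - 1) := by
      conv_lhs => rw [show k = (k - 1) + 1 by omega]
      rw [pow_succ, mul_comm]
    have hfsplit : f = (C a * X) * X ^ (k - 1) := by
      rw [hf, hxk, mul_assoc]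
    rcases hirr _ _ hfsplit with hsp | hsp
    · have hmem : (C a * X : R[X]) ∈ Ideal.span {f} := by
        rw [hsp]; exact Ideal.mem_span_singleton_self _
      obtain ⟨h, hh⟩ := Ideal.mem_span_singleton.mp hmem
      rw [hf] at hh
      have hl : (C a * X : R[X]).coeff 1 = a := by simp
      have hr : (C a * X ^ k * h : R[X]).coeff 1 = 0 := by
        rw [mul_assoc, coeff_C_mul, mul_comm ((X : R[X]) ^ k) h,
          Polynomial.coeff_mul_X_pow', if_neg (by omega), mul_zero]
      rw [hh, hr] at hl
      exact ha0 hl.symm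
    · have hmem : (X ^ (k - 1) : R[X]) ∈ Ideal.span {f} := by
        rw [hsp]; exact Ideal.mem_span_singleton_self _
      obtain ⟨h, hh⟩ := Ideal.mem_span_singleton.mp hmem
      rw [hf] at hh
      have hl : (X ^ (k - 1) : R[X]).coeff (k - 1) = 1 := by
        rw [coeff_X_pow, if_pos rfl]
      have hr : (C a * X ^ k * h : R[X]).coeff (k - 1) = 0 := by
        rw [mul_assoc, coeff_C_mul, mul_comm ((X : R[X]) ^ k) h,
          Polynomial.coeff_mul_X_pow', if_neg (by omega), mul_zero]
      rw [hh, hr] at hl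
      exact one_ne_zero hl.symm
  subst hk1
  exact ⟨a, hu, by rw [hf, pow_one]⟩
end
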